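/- arXiv:2405.01871 — 3 statements merged into one kernel-verified Lean document; each statement's English description precedes it below -/
import Mathlib

section
/- Let (E, F) be a resistance form on F and let F⁽¹⁾ denote the closure of C_c(F,ℝ) ∩ F in the Hilbert space (F, E⁽¹⁾), where E⁽¹⁾(u,v) = E(u,v)+u(x₀)v(x₀). If u ∈ F⁽¹⁾ is bounded (‖u‖_∞ < ∞), then there exists a sequence (u_n) of compactly supported functions in F converging to u with respect to E⁽¹⁾ and satisfying sup_n ‖u_n‖_∞ ≤ ‖u‖_∞. -/
open Filter Topology MeasureTheory

/-- A resistance form in the sense of Kigami: a linear subspace `dom` of real-valued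
functions containing constants together with a nonnegative symmetric bilinear form `En`
whose kernel on `dom` consists exactly of the constants, such that the quotient by
constants is complete, points are separated, the resistance suprema are finite,
and the Markov (truncation) property holds. -/
structure ResistanceForm (α : Type*) where
  dom : Set (α → ℝ)
  En : (α → ℝ) → (α → ℝ) → ℝ
  const_mem : ∀ c : ℝ, (fun _ : α => c) ∈ dom
  add_mem : ∀ f ∈ dom, ∀ g ∈ dom, f + g ∈ dom
  smul_mem : ∀ (c : ℝ), ∀ f ∈ dom, c • f ∈ dom
  symm : ∀ f ∈ dom, ∀ g ∈ dom, En f g = En g f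
  add_left : ∀ f ∈ dom, ∀ g ∈ dom, ∀ h ∈ dom, En (f + g) h = En f h + En g h
  smul_left : ∀ (c : ℝ), ∀ f ∈ dom, ∀ g ∈ dom, En (c • f) g = c * En f g
  nonneg : ∀ f ∈ dom, 0 ≤ En f f
  zero_iff : ∀ f ∈ dom, (En f f = 0 ↔ ∃ c : ℝ, ∀ x, f x = c)
  complete : ∀ u : ℕ → α → ℝ, (∀ n, u n ∈ dom) →
    (∀ ε : ℝ, 0 < ε → ∃ N : ℕ, ∀ m ≥ N, ∀ n ≥ N, En (u m - u n) (u m - u n) < ε) →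
    ∃ f ∈ dom, Tendsto (fun n => En (u n - f) (u n - f)) atTop (nhds 0)
  sep : ∀ x y : α, x ≠ y → ∃ f ∈ dom, f x ≠ f y
  res_bddAbove : ∀ x y : α,
    BddAbove {r : ℝ | ∃ f ∈ dom, 0 < En f f ∧ r = |f x - f y| ^ 2 / En f f}
  markov : ∀ f ∈ dom, (fun z => max 0 (min (f z) 1)) ∈ dom ∧
    En (fun z => max 0 (min (f z) 1)) (fun z => max 0 (min (f z) 1)) ≤ En f f

namespace ResistanceForm

/-- The resistance metric associated with a resistance form:
`R(x,y) = sup { |f x - f y|² / E(f,f) : f ∈ dom, E(f,f) > 0 }`. -/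
noncomputable def R {α : Type*} (Φ : ResistanceForm α) (x y : α) : ℝ :=
  sSup {r : ℝ | ∃ f ∈ Φ.dom, 0 < Φ.En f f ∧ r = |f x - f y| ^ 2 / Φ.En f f}

/-- Effective resistance between two sets:
`R(A,B) = (inf { E(f,f) : f ∈ dom, f ≡ 1 on A, f ≡ 0 on B })⁻¹`
(with the convention that it is `0` when no such function exists). -/
noncomputable def setRes {α : Type*} (Φ : ResistanceForm α) (A B : Set α) : ℝ :=
  (sInf {e : ℝ | ∃ f ∈ Φ.dom, (∀ x ∈ A, f x = 1) ∧ (∀ x ∈ B, f x = 0) ∧ e = Φ.En f f})⁻¹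

end ResistanceForm

/-- Membership in `F⁽¹⁾`, the closure of `C_c(F,ℝ) ∩ F` in the Hilbert space `(F, E⁽¹⁾)`
where `E⁽¹⁾(u,v) = E(u,v) + u(x₀) v(x₀)`. -/
def MemF1 {α : Type*} [TopologicalSpace α] (Φ : ResistanceForm α) (x₀ : α)
    (u : α → ℝ) : Prop :=
  u ∈ Φ.dom ∧ ∃ v : ℕ → α → ℝ,
    (∀ n, v n ∈ Φ.dom ∧ Continuous (v n) ∧ HasCompactSupport (v n)) ∧
    Filter.Tendsto (fun n => Φ.En (v n - u) (v n - u) + (v n x₀ - u x₀) ^ 2)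
      Filter.atTop (nhds 0)

namespace BddApprox

variable {α : Type*}

theorem en_sub_mem (Φ : ResistanceForm α) {f g : α → ℝ} (hf : f ∈ Φ.dom) (hg : g ∈ Φ.dom) :
    f - g ∈ Φ.dom := by
  have h1 : (-1 : ℝ) • g ∈ Φ.dom := Φ.smul_mem (-1) g hg
  have h2 := Φ.add_mem f hf _ h1
  simpa [sub_eq_add_neg, neg_one_smul] using h2

theorem en_add_right (Φ : ResistanceForm α) {f g h : α → ℝ} (hf : f ∈ Φ.dom) (hg : g ∈ Φ.dom)
    (hh : h ∈ Φ.dom) : Φ.En h (f + g) = Φ.En h f + Φ.En h g := by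
  rw [Φ.symm h hh (f + g) (Φ.add_mem f hf g hg), Φ.add_left f hf g hg h hh,
    Φ.symm f hf h hh, Φ.symm g hg h hh]

theorem en_smul_right (Φ : ResistanceForm α) (c : ℝ) {f g : α → ℝ} (hf : f ∈ Φ.dom)
    (hg : g ∈ Φ.dom) : Φ.En f (c • g) = c * Φ.En f g := by
  rw [Φ.symm f hf (c • g) (Φ.smul_mem c g hg), Φ.smul_left c g hg f hf, Φ.symm g hg f hf]

theorem en_const_self (Φ : ResistanceForm α) (c : ℝ) :
    Φ.En (fun _ : α => c) (fun _ : α => c) = 0 :=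
  (Φ.zero_iff _ (Φ.const_mem c)).mpr ⟨c, fun _ => rfl⟩

theorem en_const_right (Φ : ResistanceForm α) (c : ℝ) {f : α → ℝ} (hf : f ∈ Φ.dom) :
    Φ.En f (fun _ : α => c) = 0 := by
  have h1 : (fun _ : α => (1:ℝ)) ∈ Φ.dom := Φ.const_mem 1
  have hone : Φ.En f (fun _ : α => (1:ℝ)) = 0 := by
    by_contra hb
    have key : ∀ t : ℝ, 0 ≤ Φ.En f f + 2 * t * Φ.En f (fun _ : α => (1:ℝ)) := by
      intro t
      have hmem : f + t • (fun _ : α => (1:ℝ)) ∈ Φ.dom :=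
        Φ.add_mem f hf _ (Φ.smul_mem t _ h1)
      have hexp : Φ.En (f + t • (fun _ : α => (1:ℝ))) (f + t • (fun _ : α => (1:ℝ)))
          = Φ.En f f + 2 * t * Φ.En f (fun _ : α => (1:ℝ)) := by
        have hts : t • (fun _ : α => (1:ℝ)) ∈ Φ.dom := Φ.smul_mem t _ h1
        rw [Φ.add_left f hf _ hts _ hmem,
          en_add_right Φ hf hts hf, en_add_right Φ hf hts hts,
          Φ.smul_left t _ h1 f hf, Φ.smul_left t _ h1 _ hts,
          en_smul_right Φ t hf h1, en_smul_right Φ t h1 h1,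
          Φ.symm _ h1 f hf, en_const_self]
        ring
      have := Φ.nonneg _ hmem
      rw [hexp] at this
      exact this
    set b := Φ.En f (fun _ : α => (1:ℝ)) with hbdef
    have := key (-(Φ.En f f + 1) / (2 * b))
    have hb2 : 2 * (-(Φ.En f f + 1) / (2 * b)) * b = -(Φ.En f f + 1) := by
      field_simp
    rw [hb2] at this
    linarith
  have : (fun _ : α => c) = c • (fun _ : α => (1:ℝ)) := by funext z; simp
  rw [this, en_smul_right Φ c hf h1, hone, mul_zero]

theorem en_const_left (Φ : ResistanceForm α) (c : ℝ) {f : α → ℝ} (hf : f ∈ Φ.dom) :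
    Φ.En (fun _ : α => c) f = 0 := by
  rw [Φ.symm _ (Φ.const_mem c) f hf, en_const_right Φ c hf]

theorem en_add_const (Φ : ResistanceForm α) (c : ℝ) {f : α → ℝ} (hf : f ∈ Φ.dom) :
    Φ.En (f + fun _ => c) (f + fun _ => c) = Φ.En f f := by
  have hc : (fun _ : α => c) ∈ Φ.dom := Φ.const_mem c
  rw [Φ.add_left f hf _ hc _ (Φ.add_mem f hf _ hc),
    en_add_right Φ hf hc hf, en_add_right Φ hf hc hc,
    en_const_right Φ c hf, en_const_left Φ c hf, en_const_self]
  ring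

theorem en_smul_self (Φ : ResistanceForm α) (c : ℝ) {f : α → ℝ} (hf : f ∈ Φ.dom) :
    Φ.En (c • f) (c • f) = c ^ 2 * Φ.En f f := by
  rw [Φ.smul_left c f hf _ (Φ.smul_mem c f hf), en_smul_right Φ c hf hf]
  ring

end BddApprox

open scoped RealInnerProductSpace

namespace BddApprox

variable {α : Type*}

/-- The domain as a submodule of `α → ℝ`. -/
def domM (Φ : ResistanceForm α) : Submodule ℝ (α → ℝ) where
  carrier := Φ.dom
  add_mem' := fun hf hg => Φ.add_mem _ hf _ hg
  zero_mem' := Φ.const_mem 0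
  smul_mem' := fun c f hf => Φ.smul_mem c f hf

/-- Type synonym for the domain, carrying the `E⁽¹⁾` inner product based at `x₀`. -/
def D (Φ : ResistanceForm α) (_x₀ : α) : Type _ := ↥(domM Φ)

instance (Φ : ResistanceForm α) (x₀ : α) : AddCommGroup (D Φ x₀) :=
  inferInstanceAs (AddCommGroup ↥(domM Φ))

noncomputable instance (Φ : ResistanceForm α) (x₀ : α) : Module ℝ (D Φ x₀) :=
  inferInstanceAs (Module ℝ ↥(domM Φ))

/-- The underlying function of an element of `D`. -/
def Dval {Φ : ResistanceForm α} {x₀ : α} (f : D Φ x₀) : α → ℝ :=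
  (show ↥(domM Φ) from f).1

theorem Dval_mem {Φ : ResistanceForm α} {x₀ : α} (f : D Φ x₀) : Dval f ∈ Φ.dom :=
  (show ↥(domM Φ) from f).2

/-- Constructor for `D`. -/
def mkD (Φ : ResistanceForm α) (x₀ : α) (f : α → ℝ) (hf : f ∈ Φ.dom) : D Φ x₀ :=
  show ↥(domM Φ) from ⟨f, hf⟩

@[simp] theorem Dval_mkD (Φ : ResistanceForm α) (x₀ : α) (f : α → ℝ) (hf : f ∈ Φ.dom) :
    Dval (mkD Φ x₀ f hf) = f := rfl

@[simp] theorem Dval_add {Φ : ResistanceForm α} {x₀ : α} (f g : D Φ x₀) :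
    Dval (f + g) = Dval f + Dval g := rfl

@[simp] theorem Dval_sub {Φ : ResistanceForm α} {x₀ : α} (f g : D Φ x₀) :
    Dval (f - g) = Dval f - Dval g := rfl

@[simp] theorem Dval_smul {Φ : ResistanceForm α} {x₀ : α} (c : ℝ) (f : D Φ x₀) :
    Dval (c • f) = c • Dval f := rfl

@[simp] theorem Dval_zero {Φ : ResistanceForm α} {x₀ : α} :
    Dval (0 : D Φ x₀) = 0 := rfl

theorem Dext {Φ : ResistanceForm α} {x₀ : α} {f g : D Φ x₀} (h : Dval f = Dval g) :
    f = g := Subtype.ext h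

theorem Dval_sum {Φ : ResistanceForm α} {x₀ : α} {ι : Type*} (s : Finset ι)
    (f : ι → D Φ x₀) : Dval (∑ i ∈ s, f i) = ∑ i ∈ s, Dval (f i) := by
  classical
  induction s using Finset.induction_on with
  | empty => simp
  | insert x s hx ih => rw [Finset.sum_insert hx, Finset.sum_insert hx, Dval_add, ih]

noncomputable instance coreD (Φ : ResistanceForm α) (x₀ : α) :
    InnerProductSpace.Core ℝ (D Φ x₀) where
  inner f g := Φ.En (Dval f) (Dval g) + Dval f x₀ * Dval g x₀
  conj_inner_symm f g := by
    simp only [starRingEnd_apply, star_trivial]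
    rw [Φ.symm _ (Dval_mem g) _ (Dval_mem f)]
    ring
  re_inner_nonneg f := by
    simpa using add_nonneg (Φ.nonneg _ (Dval_mem f)) (mul_self_nonneg (Dval f x₀))
  add_left f g h := by
    simp only [Dval_add, Pi.add_apply]
    rw [Φ.add_left _ (Dval_mem f) _ (Dval_mem g) _ (Dval_mem h)]
    ring
  smul_left f g r := by
    simp only [Dval_smul, Pi.smul_apply, smul_eq_mul, starRingEnd_apply, star_trivial]
    rw [Φ.smul_left r _ (Dval_mem f) _ (Dval_mem g)]
    ring
  definite f hf := by
    have h1 : 0 ≤ Φ.En (Dval f) (Dval f) := Φ.nonneg _ (Dval_mem f)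
    have h2 : 0 ≤ Dval f x₀ * Dval f x₀ := mul_self_nonneg _
    have hEn : Φ.En (Dval f) (Dval f) = 0 := by
      have : Φ.En (Dval f) (Dval f) + Dval f x₀ * Dval f x₀ = 0 := hf
      linarith
    obtain ⟨c, hc⟩ := (Φ.zero_iff _ (Dval_mem f)).mp hEn
    have hx0 : Dval f x₀ = 0 := by
      have : Φ.En (Dval f) (Dval f) + Dval f x₀ * Dval f x₀ = 0 := hf
      nlinarith
    have hc0 : c = 0 := by rw [← hc x₀]; exact hx0
    exact Dext (funext fun x => by rw [hc x, hc0]; rfl)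

noncomputable instance (Φ : ResistanceForm α) (x₀ : α) : NormedAddCommGroup (D Φ x₀) :=
  (coreD Φ x₀).toNormedAddCommGroup

noncomputable instance (Φ : ResistanceForm α) (x₀ : α) : InnerProductSpace ℝ (D Φ x₀) :=
  InnerProductSpace.ofCore (coreD Φ x₀).toCore

theorem inner_def {Φ : ResistanceForm α} {x₀ : α} (f g : D Φ x₀) :
    ⟪f, g⟫ = Φ.En (Dval f) (Dval g) + Dval f x₀ * Dval g x₀ := rfl

theorem norm_sq_eq {Φ : ResistanceForm α} {x₀ : α} (f : D Φ x₀) :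
    ‖f‖ ^ 2 = Φ.En (Dval f) (Dval f) + Dval f x₀ * Dval f x₀ := by
  rw [← real_inner_self_eq_norm_sq, inner_def]

theorem norm_eq_sqrt {Φ : ResistanceForm α} {x₀ : α} (f : D Φ x₀) :
    ‖f‖ = Real.sqrt (Φ.En (Dval f) (Dval f) + Dval f x₀ * Dval f x₀) := by
  rw [← norm_sq_eq, Real.sqrt_sq (norm_nonneg f)]

theorem en_le_norm_sq {Φ : ResistanceForm α} {x₀ : α} (f : D Φ x₀) :
    Φ.En (Dval f) (Dval f) ≤ ‖f‖ ^ 2 := by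
  rw [norm_sq_eq]; nlinarith [mul_self_nonneg (Dval f x₀)]

theorem abs_eval_x0_le_norm {Φ : ResistanceForm α} {x₀ : α} (f : D Φ x₀) :
    |Dval f x₀| ≤ ‖f‖ := by
  have h : Dval f x₀ ^ 2 ≤ ‖f‖ ^ 2 := by
    rw [norm_sq_eq]; nlinarith [Φ.nonneg _ (Dval_mem f)]
  calc |Dval f x₀| = Real.sqrt (Dval f x₀ ^ 2) := (Real.sqrt_sq_eq_abs _).symm
    _ ≤ Real.sqrt (‖f‖ ^ 2) := Real.sqrt_le_sqrt h
    _ = ‖f‖ := Real.sqrt_sq (norm_nonneg f)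

end BddApprox

namespace BddApprox

variable {α : Type*}

theorem en_sub_const (Φ : ResistanceForm α) (c : ℝ) {f : α → ℝ} (hf : f ∈ Φ.dom) :
    Φ.En (f - fun _ => c) (f - fun _ => c) = Φ.En f f := by
  have : (f - fun _ : α => c) = f + fun _ : α => (-c) := by
    funext z; simp [sub_eq_add_neg]
  rw [this, en_add_const Φ (-c) hf]

noncomputable instance (Φ : ResistanceForm α) (x₀ : α) : CompleteSpace (D Φ x₀) := by
  apply Metric.complete_of_cauchySeq_tendsto
  intro s hs
  -- Energy Cauchy condition
  have hcau := Metric.cauchySeq_iff.mp hs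
  have hEcau : ∀ ε : ℝ, 0 < ε → ∃ N : ℕ, ∀ m ≥ N, ∀ n ≥ N,
      Φ.En (Dval (s m) - Dval (s n)) (Dval (s m) - Dval (s n)) < ε := by
    intro ε hε
    obtain ⟨N, hN⟩ := hcau (Real.sqrt ε) (Real.sqrt_pos.mpr hε)
    refine ⟨N, fun m hm n hn => ?_⟩
    have hd := hN m hm n hn
    rw [dist_eq_norm] at hd
    have h1 : Φ.En (Dval (s m - s n)) (Dval (s m - s n)) ≤ ‖s m - s n‖ ^ 2 :=
      en_le_norm_sq _
    have h2 : ‖s m - s n‖ ^ 2 < Real.sqrt ε ^ 2 := by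
      have := norm_nonneg (s m - s n)
      nlinarith
    rw [Real.sq_sqrt hε.le] at h2
    calc Φ.En (Dval (s m) - Dval (s n)) (Dval (s m) - Dval (s n))
        = Φ.En (Dval (s m - s n)) (Dval (s m - s n)) := by rw [Dval_sub]
      _ ≤ ‖s m - s n‖ ^ 2 := h1
      _ < ε := h2
  obtain ⟨f, hfdom, hftend⟩ := Φ.complete (fun n => Dval (s n)) (fun n => Dval_mem _) hEcau
  -- Values at x₀ converge
  have hlip : LipschitzWith 1 (fun g : D Φ x₀ => Dval g x₀) := by
    apply LipschitzWith.of_dist_le_mul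
    intro g h
    rw [Real.dist_eq, dist_eq_norm, NNReal.coe_one, one_mul]
    have : Dval g x₀ - Dval h x₀ = Dval (g - h) x₀ := by rw [Dval_sub]; rfl
    rw [this]
    exact abs_eval_x0_le_norm _
  have hcau0 : CauchySeq (fun n => Dval (s n) x₀) :=
    hlip.uniformContinuous.comp_cauchySeq hs
  obtain ⟨a, ha⟩ := cauchySeq_tendsto_of_complete hcau0
  -- the limit
  set g : α → ℝ := f + fun _ => a - f x₀ with hg
  have hgdom : g ∈ Φ.dom := Φ.add_mem f hfdom _ (Φ.const_mem _)
  refine ⟨mkD Φ x₀ g hgdom, ?_⟩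
  rw [tendsto_iff_dist_tendsto_zero]
  have hdist : ∀ n, dist (s n) (mkD Φ x₀ g hgdom)
      = Real.sqrt (Φ.En (Dval (s n) - f) (Dval (s n) - f) + (Dval (s n) x₀ - a) ^ 2) := by
    intro n
    rw [dist_eq_norm, norm_eq_sqrt]
    congr 1
    have hv : Dval (s n - mkD Φ x₀ g hgdom) = Dval (s n) - g := by rw [Dval_sub]; rfl
    have h1 : Dval (s n) - g = (Dval (s n) - f) - fun _ => a - f x₀ := by
      funext z
      simp only [hg, Pi.sub_apply, Pi.add_apply]
      ring
    have hEn : Φ.En (Dval (s n) - g) (Dval (s n) - g)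
        = Φ.En (Dval (s n) - f) (Dval (s n) - f) := by
      rw [h1, en_sub_const Φ _ (en_sub_mem Φ (Dval_mem _) hfdom)]
    have h2 : (Dval (s n) - g) x₀ = Dval (s n) x₀ - a := by
      simp only [hg, Pi.sub_apply, Pi.add_apply]
      ring
    rw [hv, hEn, h2]
    ring
  simp only [hdist]
  have hin : Tendsto (fun n => Φ.En (Dval (s n) - f) (Dval (s n) - f)
      + (Dval (s n) x₀ - a) ^ 2) atTop (nhds 0) := by
    have h2 : Tendsto (fun n => (Dval (s n) x₀ - a) ^ 2) atTop (nhds 0) := by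
      have := (ha.sub_const a)
      have h3 : Tendsto (fun n => (Dval (s n) x₀ - a)) atTop (nhds 0) := by
        simpa using this
      simpa using h3.pow 2
    simpa using hftend.add h2
  have := (Real.continuous_sqrt.tendsto 0).comp hin
  simpa [Function.comp_def] using this

theorem abs_sub_sq_le_res (Φ : ResistanceForm α) (x y : α) {f : α → ℝ} (hf : f ∈ Φ.dom) :
    |f x - f y| ^ 2 ≤ Φ.R x y * Φ.En f f := by
  rcases eq_or_lt_of_le (Φ.nonneg f hf) with h0 | hpos
  · obtain ⟨c, hc⟩ := (Φ.zero_iff f hf).mp h0.symm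
    rw [hc x, hc y, ← h0]
    simp
  · have hmem : |f x - f y| ^ 2 / Φ.En f f ∈
        {r : ℝ | ∃ g ∈ Φ.dom, 0 < Φ.En g g ∧ r = |g x - g y| ^ 2 / Φ.En g g} :=
      ⟨f, hf, hpos, rfl⟩
    have hle := le_csSup (Φ.res_bddAbove x y) hmem
    rw [ResistanceForm.R]
    exact (div_le_iff₀ hpos).mp hle

theorem abs_eval_le_norm {Φ : ResistanceForm α} {x₀ : α} (x : α) (hR : 0 ≤ Φ.R x x₀)
    (f : D Φ x₀) : |Dval f x| ≤ (1 + Real.sqrt (Φ.R x x₀)) * ‖f‖ := by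
  have h1 : |Dval f x - Dval f x₀| ≤ Real.sqrt (Φ.R x x₀) * ‖f‖ := by
    have hsq : |Dval f x - Dval f x₀| ^ 2 ≤ Φ.R x x₀ * Φ.En (Dval f) (Dval f) :=
      abs_sub_sq_le_res Φ x x₀ (Dval_mem f)
    calc |Dval f x - Dval f x₀| = Real.sqrt (|Dval f x - Dval f x₀| ^ 2) := by
          rw [Real.sqrt_sq_eq_abs, abs_abs]
      _ ≤ Real.sqrt (Φ.R x x₀ * Φ.En (Dval f) (Dval f)) := Real.sqrt_le_sqrt hsq
      _ ≤ Real.sqrt (Φ.R x x₀ * ‖f‖ ^ 2) := by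
          apply Real.sqrt_le_sqrt
          exact mul_le_mul_of_nonneg_left (en_le_norm_sq f) hR
      _ = Real.sqrt (Φ.R x x₀) * ‖f‖ := by
          rw [Real.sqrt_mul hR, Real.sqrt_sq (norm_nonneg f)]
  have h2 : |Dval f x₀| ≤ ‖f‖ := abs_eval_x0_le_norm f
  have h3 : |Dval f x| ≤ |Dval f x₀| + |Dval f x - Dval f x₀| := by
    have := abs_add_le (Dval f x₀) (Dval f x - Dval f x₀)
    simpa using this
  nlinarith [Real.sqrt_nonneg (Φ.R x x₀), norm_nonneg f]

/-- The evaluation functional as a continuous linear map. -/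
noncomputable def evalCLM (Φ : ResistanceForm α) (x₀ : α) (x : α) (hR : 0 ≤ Φ.R x x₀) :
    D Φ x₀ →L[ℝ] ℝ :=
  LinearMap.mkContinuous
    { toFun := fun f => Dval f x
      map_add' := fun f g => by
        show Dval (f + g) x = Dval f x + Dval g x
        rw [Dval_add]; rfl
      map_smul' := fun c f => by
        show Dval (c • f) x = c • Dval f x
        rw [Dval_smul]; rfl }
    (1 + Real.sqrt (Φ.R x x₀))
    (fun f => by
      rw [Real.norm_eq_abs]
      exact abs_eval_le_norm x hR f)

theorem evalCLM_apply (Φ : ResistanceForm α) (x₀ : α) (x : α) (hR : 0 ≤ Φ.R x x₀)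
    (f : D Φ x₀) : evalCLM Φ x₀ x hR f = Dval f x := rfl

theorem weak_tendsto (Φ : ResistanceForm α) (x₀ : α) (hR : ∀ x, 0 ≤ Φ.R x x₀)
    (Z : ℕ → D Φ x₀) (C : ℝ) (hC : ∀ n, ‖Z n‖ ≤ C)
    (hpt : ∀ x, Tendsto (fun n => Dval (Z n) x) atTop (nhds 0)) (g : D Φ x₀) :
    Tendsto (fun n => ⟪Z n, g⟫) atTop (nhds 0) := by
  have hC0 : (0:ℝ) ≤ C := le_trans (norm_nonneg (Z 0)) (hC 0)
  set e : α → D Φ x₀ := fun x =>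
    (InnerProductSpace.toDual ℝ (D Φ x₀)).symm (evalCLM Φ x₀ x (hR x)) with he
  have heval : ∀ (x : α) (f : D Φ x₀), ⟪e x, f⟫ = Dval f x := by
    intro x f
    rw [he]
    exact InnerProductSpace.toDual_symm_apply
  set S : Submodule ℝ (D Φ x₀) := Submodule.span ℝ (Set.range e) with hS
  have hperp : Sᗮ = ⊥ := by
    rw [Submodule.eq_bot_iff]
    intro f hf
    apply Dext
    funext x
    have hx := hf (e x) (Submodule.subset_span ⟨x, rfl⟩)
    rw [heval] at hx
    simpa using hx
  have hdense : S.topologicalClosure = ⊤ :=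
    Submodule.topologicalClosure_eq_top_iff.mpr hperp
  have hspan : ∀ s ∈ S, Tendsto (fun n => ⟪Z n, s⟫) atTop (nhds 0) := by
    intro s hsS
    induction hsS using Submodule.span_induction with
    | mem y hy =>
      obtain ⟨x, rfl⟩ := hy
      have : (fun n => ⟪Z n, e x⟫) = fun n => Dval (Z n) x := by
        funext n; rw [real_inner_comm, heval]
      rw [this]
      exact hpt x
    | zero => simpa [inner_zero_right] using (tendsto_const_nhds : Tendsto (fun _ : ℕ => (0:ℝ)) atTop (nhds 0))
    | add y z _ _ hy hz => simpa [inner_add_right] using hy.add hz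
    | smul c y _ hy => simpa [inner_smul_right] using hy.const_mul c
  rw [Metric.tendsto_atTop]
  intro ε hε
  have hδ : (0:ℝ) < ε / (2 * (C + 1)) := by positivity
  have hgcl : g ∈ closure (S : Set (D Φ x₀)) := by
    have : g ∈ S.topologicalClosure := by rw [hdense]; trivial
    exact this
  obtain ⟨s, hsS, hds⟩ := Metric.mem_closure_iff.mp hgcl _ hδ
  obtain ⟨N, hN⟩ := Metric.tendsto_atTop.mp (hspan s hsS) (ε / 2) (by positivity)
  refine ⟨N, fun n hn => ?_⟩
  rw [Real.dist_eq, sub_zero]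
  have h1 : |⟪Z n, s⟫| < ε / 2 := by
    have := hN n hn
    rwa [Real.dist_eq, sub_zero] at this
  have h2 : |⟪Z n, g - s⟫| ≤ C * (ε / (2 * (C + 1))) := by
    calc |⟪Z n, g - s⟫| ≤ ‖Z n‖ * ‖g - s‖ := abs_real_inner_le_norm _ _
      _ ≤ C * (ε / (2 * (C + 1))) := by
        apply mul_le_mul (hC n) _ (norm_nonneg _) hC0
        rw [← dist_eq_norm]
        exact hds.le
  have h3 : C * (ε / (2 * (C + 1))) < ε / 2 := by
    have hpos : (0:ℝ) < 2 * (C + 1) := by linarith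
    rw [← mul_div_assoc, div_lt_div_iff₀ hpos (by norm_num : (0:ℝ) < 2)]
    nlinarith
  have h4 : ⟪Z n, g⟫ = ⟪Z n, s⟫ + ⟪Z n, g - s⟫ := by
    rw [inner_sub_right]; ring
  rw [h4]
  calc |⟪Z n, s⟫ + ⟪Z n, g - s⟫| ≤ |⟪Z n, s⟫| + |⟪Z n, g - s⟫| := abs_add_le _ _
    _ < ε := by linarith

end BddApprox

namespace BddApprox

variable {α : Type*}

theorem trunc_mem_le (Φ : ResistanceForm α) {f : α → ℝ} (hf : f ∈ Φ.dom) {M : ℝ}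
    (hM : 0 ≤ M) :
    (fun z => max (-M) (min (f z) M)) ∈ Φ.dom ∧
      Φ.En (fun z => max (-M) (min (f z) M)) (fun z => max (-M) (min (f z) M)) ≤ Φ.En f f := by
  rcases eq_or_lt_of_le hM with h0 | hpos
  · -- M = 0 : the truncation is the zero function
    have hzero : (fun z => max (-M) (min (f z) M)) = fun _ : α => (0:ℝ) := by
      funext z
      rw [← h0]
      simp only [neg_zero]
      rcases le_total (f z) 0 with h | h
      · rw [min_eq_left h, max_eq_left h]
      · rw [min_eq_right h, max_self]
    rw [hzero]
    exact ⟨Φ.const_mem 0, by rw [en_const_self]; exact Φ.nonneg f hf⟩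
  · -- M > 0
    have h2M : (0:ℝ) < 2 * M := by linarith
    set g : α → ℝ := (2 * M)⁻¹ • (f + fun _ => M) with hgdef
    have hgdom : g ∈ Φ.dom := Φ.smul_mem _ _ (Φ.add_mem f hf _ (Φ.const_mem M))
    obtain ⟨hhdom, hhen⟩ := Φ.markov g hgdom
    have hEg : Φ.En g g = (2 * M)⁻¹ ^ 2 * Φ.En f f := by
      rw [hgdef, en_smul_self Φ _ (Φ.add_mem f hf _ (Φ.const_mem M)), en_add_const Φ M hf]
    -- the truncation equals 2M * h - M
    have hkey : (fun z => max (-M) (min (f z) M))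
        = (2 * M) • (fun z => max 0 (min (g z) 1)) + fun _ => (-M) := by
      funext z
      simp only [Pi.add_apply, Pi.smul_apply, smul_eq_mul, hgdef, Pi.add_apply]
      have hg : (2 * M)⁻¹ * (f z + M) = (f z + M) / (2 * M) := by ring
      rcases le_total (f z) (-M) with h1 | h1
      · have ha : (f z + M) / (2 * M) ≤ 0 := div_nonpos_of_nonpos_of_nonneg (by linarith) h2M.le
        have hb : min ((2*M)⁻¹ * (f z + M)) 1 ≤ 0 := by
          rw [hg]
          exact le_trans (min_le_left _ _) ha
        rw [max_eq_left hb, min_eq_left (by linarith : f z ≤ M), max_eq_left h1]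
        ring
      · rcases le_total (f z) M with h2 | h2
        · have ha : 0 ≤ (f z + M) / (2 * M) := div_nonneg (by linarith) h2M.le
          have hb : (f z + M) / (2 * M) ≤ 1 := by
            rw [div_le_one h2M]; linarith
          rw [hg, min_eq_left hb, max_eq_right ha, min_eq_left h2, max_eq_right h1]
          field_simp
          ring
        · have ha : (1:ℝ) ≤ (f z + M) / (2 * M) := by
            rw [le_div_iff₀ h2M]; linarith
          rw [hg, min_eq_right ha, max_eq_right (by norm_num : (0:ℝ) ≤ 1),
            min_eq_right h2, max_eq_right (by linarith : -M ≤ M)]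
          ring
    constructor
    · rw [hkey]
      exact Φ.add_mem _ (Φ.smul_mem _ _ hhdom) _ (Φ.const_mem (-M))
    · rw [hkey]
      have h1 : Φ.En ((2 * M) • (fun z => max 0 (min (g z) 1)) + fun _ => (-M))
          ((2 * M) • (fun z => max 0 (min (g z) 1)) + fun _ => (-M))
          = (2 * M) ^ 2 * Φ.En (fun z => max 0 (min (g z) 1)) (fun z => max 0 (min (g z) 1)) := by
        rw [en_add_const Φ (-M) (Φ.smul_mem _ _ hhdom), en_smul_self Φ _ hhdom]
      rw [h1]
      calc (2 * M) ^ 2 * Φ.En (fun z => max 0 (min (g z) 1)) (fun z => max 0 (min (g z) 1))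
          ≤ (2 * M) ^ 2 * Φ.En g g := by
            apply mul_le_mul_of_nonneg_left hhen (by positivity)
        _ = Φ.En f f := by
            rw [hEg]
            field_simp
end BddApprox

open BddApprox

set_option maxHeartbeats 1000000

/-- A bounded element of `F⁽¹⁾` can be approximated in `E⁽¹⁾` by
compactly supported functions in `F` whose sup-norms are bounded by that of `u`. -/
theorem bounded_approx_in_F1 {α : Type*} [MetricSpace α] [Nonempty α]
    (Φ : ResistanceForm α) (hdist : ∀ x y : α, dist x y = Φ.R x y) (x₀ : α)
    (u : α → ℝ) (hu : MemF1 Φ x₀ u)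
    (hb : BddAbove (Set.range fun x => |u x|)) :
    ∃ v : ℕ → α → ℝ,
      (∀ n, v n ∈ Φ.dom ∧ Continuous (v n) ∧ HasCompactSupport (v n)) ∧
      Tendsto (fun n => Φ.En (v n - u) (v n - u) + (v n x₀ - u x₀) ^ 2)
        atTop (nhds 0) ∧
      ∀ n x, |v n x| ≤ ⨆ y, |u y| := by
  classical
  obtain ⟨huDom, v, hv, hvE⟩ := hu
  set M : ℝ := ⨆ y, |u y| with hMdef
  have hMx : ∀ x, |u x| ≤ M := fun x => le_ciSup hb x
  have hM0 : (0:ℝ) ≤ M := le_trans (abs_nonneg _) (hMx x₀)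
  have hR : ∀ x, 0 ≤ Φ.R x x₀ := fun x => by rw [← hdist]; exact dist_nonneg
  set U : D Φ x₀ := mkD Φ x₀ u huDom with hU
  set V : ℕ → D Φ x₀ := fun n => mkD Φ x₀ (v n) (hv n).1 with hV
  -- convergence of V to U in norm
  have hVUsq : Tendsto (fun n => ⟪V n - U, V n - U⟫) atTop (nhds 0) := by
    have heq : (fun n => ⟪V n - U, V n - U⟫)
        = fun n => Φ.En (v n - u) (v n - u) + (v n x₀ - u x₀) ^ 2 := by
      funext n
      simp only [inner_def, hV, hU, Dval_sub, Dval_mkD, Pi.sub_apply]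
      ring
    rw [heq]
    exact hvE
  have hVU : Tendsto (fun n => ‖V n - U‖) atTop (nhds 0) := by
    have heq : (fun n => ‖V n - U‖) = fun n => Real.sqrt ⟪V n - U, V n - U⟫ := by
      funext n
      rw [norm_eq_sqrt, inner_def]
    rw [heq]
    have := (Real.continuous_sqrt.tendsto 0).comp hVUsq
    simpa [Function.comp_def] using this
  -- the truncated sequence
  set w : ℕ → α → ℝ := fun n z => max (-M) (min (v n z) M) with hw
  have hwd : ∀ n, w n ∈ Φ.dom ∧ Φ.En (w n) (w n) ≤ Φ.En (v n) (v n) := by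
    intro n
    simp only [hw]
    exact trunc_mem_le Φ (hv n).1 hM0
  have hwb : ∀ n z, |w n z| ≤ M := by
    intro n z
    rw [hw, abs_le]
    refine ⟨le_max_left _ _, max_le (by linarith) (min_le_right _ _)⟩
  have hwc : ∀ n, Continuous (w n) := by
    intro n
    rw [hw]
    exact continuous_const.max (((hv n).2.1).min continuous_const)
  have hws : ∀ n, HasCompactSupport (w n) := by
    intro n
    have heq : w n = (fun r : ℝ => max (-M) (min r M)) ∘ v n := by rw [hw]; rfl
    rw [heq]
    apply ((hv n).2.2).comp_left
    rw [min_eq_left hM0, max_eq_right (neg_nonpos.mpr hM0)]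
  set W : ℕ → D Φ x₀ := fun n => mkD Φ x₀ (w n) (hwd n).1 with hW
  set Z : ℕ → D Φ x₀ := fun n => W n - U with hZ
  -- pointwise convergence
  have hptv : ∀ x, Tendsto (fun n => v n x) atTop (nhds (u x)) := by
    intro x
    have hbd : ∀ n, |v n x - u x| ≤ (1 + Real.sqrt (Φ.R x x₀)) * ‖V n - U‖ := by
      intro n
      have h := abs_eval_le_norm x (hR x) (V n - U)
      simpa [hV, hU, Dval_sub, Dval_mkD, Pi.sub_apply] using h
    have h0 : Tendsto (fun n => v n x - u x) atTop (nhds 0) := by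
      apply squeeze_zero_norm (fun n => by simpa [Real.norm_eq_abs] using hbd n)
      simpa using hVU.const_mul (1 + Real.sqrt (Φ.R x x₀))
    have := h0.add_const (u x)
    simpa using this
  have hptw : ∀ x, Tendsto (fun n => Dval (Z n) x) atTop (nhds 0) := by
    intro x
    have htM : Continuous (fun r : ℝ => max (-M) (min r M)) :=
      continuous_const.max (continuous_id.min continuous_const)
    have h1 : Tendsto (fun n => w n x) atTop (nhds (max (-M) (min (u x) M))) := by
      have := (htM.tendsto (u x)).comp (hptv x)
      simpa [hw, Function.comp_def] using this
    have h2 : max (-M) (min (u x) M) = u x := by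
      obtain ⟨hl, hr⟩ := abs_le.mp (hMx x)
      rw [min_eq_left hr, max_eq_right hl]
    rw [h2] at h1
    have h3 : Tendsto (fun n => w n x - u x) atTop (nhds 0) := by
      simpa using h1.sub_const (u x)
    have heq : (fun n => Dval (Z n) x) = fun n => w n x - u x := by
      funext n
      simp only [hZ, hW, hU, Dval_sub, Dval_mkD, Pi.sub_apply]
    rw [heq]
    exact h3
  -- uniform bound on ‖Z n‖
  obtain ⟨C₀, hC₀mem⟩ := hVU.bddAbove_range
  have hC₀ : ∀ n, ‖V n - U‖ ≤ C₀ := fun n => hC₀mem (Set.mem_range_self n)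
  set B : ℝ := Real.sqrt ((C₀ + ‖U‖) ^ 2 + M ^ 2) with hB
  have hWnorm : ∀ n, ‖W n‖ ≤ B := by
    intro n
    have h1 : ‖V n‖ ≤ C₀ + ‖U‖ := by
      calc ‖V n‖ = ‖(V n - U) + U‖ := by rw [sub_add_cancel]
        _ ≤ ‖V n - U‖ + ‖U‖ := norm_add_le _ _
        _ ≤ C₀ + ‖U‖ := by linarith [hC₀ n]
    have h2 : ‖W n‖ ^ 2 ≤ (C₀ + ‖U‖) ^ 2 + M ^ 2 := by
      rw [norm_sq_eq]
      have hEn := (hwd n).2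
      have hEv : Φ.En (v n) (v n) ≤ ‖V n‖ ^ 2 := by
        have := en_le_norm_sq (V n)
        simpa [hV, Dval_mkD] using this
      have hDW : Dval (W n) = w n := by simp only [hW, Dval_mkD]
      have hx0 : Dval (W n) x₀ * Dval (W n) x₀ ≤ M ^ 2 := by
        have habs : |Dval (W n) x₀| ≤ M := by rw [hDW]; exact hwb n x₀
        have h5 := mul_self_le_mul_self (abs_nonneg (Dval (W n) x₀)) habs
        rw [abs_mul_abs_self] at h5
        calc Dval (W n) x₀ * Dval (W n) x₀ ≤ M * M := h5
          _ = M ^ 2 := (sq M).symm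
      have hV2 : ‖V n‖ ^ 2 ≤ (C₀ + ‖U‖) ^ 2 := by
        have h0 := norm_nonneg (V n)
        exact pow_le_pow_left₀ h0 h1 2
      rw [hDW] at hx0
      rw [hDW]
      linarith
    calc ‖W n‖ = Real.sqrt (‖W n‖ ^ 2) := (Real.sqrt_sq (norm_nonneg _)).symm
      _ ≤ B := by rw [hB]; exact Real.sqrt_le_sqrt h2
  set C : ℝ := B + ‖U‖ with hC
  have hCZ : ∀ n, ‖Z n‖ ≤ C := by
    intro n
    rw [hZ, hC]
    calc ‖W n - U‖ ≤ ‖W n‖ + ‖U‖ := norm_sub_le _ _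
      _ ≤ B + ‖U‖ := by linarith [hWnorm n]
  -- weak convergence
  have hweak := weak_tendsto Φ x₀ hR Z C hCZ hptw
  -- extraction of a good subsequence
  have hstep : ∀ N : ℕ, ∃ m, N < m ∧ ∀ j ≤ N, |⟪Z m, Z j⟫| ≤ ((N:ℝ) + 1)⁻¹ := by
    intro N
    have hev : ∀ j ∈ Set.Iic N, ∀ᶠ m in atTop, |⟪Z m, Z j⟫| ≤ ((N:ℝ) + 1)⁻¹ := by
      intro j _
      have hδ : (0:ℝ) < ((N:ℝ) + 1)⁻¹ := by positivity
      obtain ⟨K, hK⟩ := Metric.tendsto_atTop.mp (hweak (Z j)) _ hδ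
      filter_upwards [eventually_ge_atTop K] with m hm
      have := hK m hm
      rw [Real.dist_eq, sub_zero] at this
      exact this.le
    have h2 : ∀ᶠ m in atTop, ∀ j ∈ Set.Iic N, |⟪Z m, Z j⟫| ≤ ((N:ℝ) + 1)⁻¹ :=
      ((Set.finite_Iic N).eventually_all).mpr hev
    obtain ⟨m, hm1, hm2⟩ := ((eventually_gt_atTop N).and h2).exists
    exact ⟨m, hm1, fun j hj => hm2 j hj⟩
  choose next hnext1 hnext2 using hstep
  obtain ⟨φ, hφ0, hφsucc⟩ : ∃ φ : ℕ → ℕ, φ 0 = 0 ∧ ∀ k, φ (k+1) = next (φ k) :=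
    ⟨fun k => Nat.rec 0 (fun _ pk => next pk) k, rfl, fun k => rfl⟩
  have hmono : StrictMono φ := strictMono_nat_of_lt_succ fun k => by
    rw [hφsucc]; exact hnext1 (φ k)
  have hlek : ∀ k, k ≤ φ k := fun k => hmono.le_apply
  have hpair : ∀ i n, i < n → |⟪Z (φ n), Z (φ i)⟫| ≤ (n:ℝ)⁻¹ := by
    intro i n hin
    cases n with
    | zero => omega
    | succ m =>
      have h1 : φ i ≤ φ m := hmono.monotone (Nat.lt_succ_iff.mp hin)
      have h2 := hnext2 (φ m) (φ i) h1
      rw [← hφsucc m] at h2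
      refine h2.trans ?_
      have hcast : (m:ℝ) + 1 ≤ (φ m : ℝ) + 1 := by
        have := hlek m
        exact_mod_cast by exact_mod_cast Nat.succ_le_succ this
      have hpos : (0:ℝ) < (m:ℝ) + 1 := by positivity
      calc ((φ m : ℝ) + 1)⁻¹ ≤ ((m:ℝ) + 1)⁻¹ := by
            apply inv_anti₀ hpos hcast
        _ = ((m+1:ℕ):ℝ)⁻¹ := by push_cast; ring
  -- norm bound on partial sums
  have hsum : ∀ n : ℕ, ‖∑ i ∈ Finset.range n, Z (φ i)‖ ^ 2 ≤ n * (C ^ 2 + 2) := by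
    intro n
    induction n with
    | zero => simp
    | succ n ih =>
      rw [Finset.sum_range_succ]
      have hip : ⟪∑ i ∈ Finset.range n, Z (φ i), Z (φ n)⟫ ≤ 1 := by
        rw [sum_inner]
        have hterm : ∀ i ∈ Finset.range n, ⟪Z (φ i), Z (φ n)⟫ ≤ (n:ℝ)⁻¹ := by
          intro i hi
          calc ⟪Z (φ i), Z (φ n)⟫ ≤ |⟪Z (φ i), Z (φ n)⟫| := le_abs_self _
            _ = |⟪Z (φ n), Z (φ i)⟫| := by rw [real_inner_comm]
            _ ≤ (n:ℝ)⁻¹ := hpair i n (Finset.mem_range.mp hi)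
        calc ∑ i ∈ Finset.range n, ⟪Z (φ i), Z (φ n)⟫
            ≤ ∑ _i ∈ Finset.range n, (n:ℝ)⁻¹ := Finset.sum_le_sum hterm
          _ = n * (n:ℝ)⁻¹ := by rw [Finset.sum_const, Finset.card_range, nsmul_eq_mul]
          _ ≤ 1 := by
            rcases Nat.eq_zero_or_pos n with h | h
            · simp [h]
            · rw [mul_inv_cancel₀ (by exact_mod_cast h.ne' : (n:ℝ) ≠ 0)]
      have hz : ‖Z (φ n)‖ ^ 2 ≤ C ^ 2 :=
        pow_le_pow_left₀ (norm_nonneg _) (hCZ (φ n)) 2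
      have hexp := norm_add_sq_real (∑ i ∈ Finset.range n, Z (φ i)) (Z (φ n))
      rw [hexp]
      push_cast
      linarith [ih, hip, hz]
  -- the Cesàro means of the truncated subsequence
  set vD : ℕ → D Φ x₀ := fun k => ((k:ℝ) + 1)⁻¹ • ∑ i ∈ Finset.range (k+1), W (φ i) with hvD
  have hval : ∀ k, Dval (vD k) = fun x => ((k:ℝ) + 1)⁻¹ * ∑ i ∈ Finset.range (k+1), w (φ i) x := by
    intro k
    rw [hvD]
    rw [Dval_smul, Dval_sum]
    funext x
    simp only [Pi.smul_apply, Finset.sum_apply, smul_eq_mul, hW, Dval_mkD]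
  have hkey : ∀ k, vD k - U = ((k:ℝ) + 1)⁻¹ • ∑ i ∈ Finset.range (k+1), Z (φ i) := by
    intro k
    have h1 : ∑ i ∈ Finset.range (k+1), Z (φ i)
        = (∑ i ∈ Finset.range (k+1), W (φ i)) - (k+1) • U := by
      simp only [hZ]
      rw [Finset.sum_sub_distrib, Finset.sum_const, Finset.card_range]
    rw [hvD, h1, smul_sub]
    congr 1
    rw [← Nat.cast_smul_eq_nsmul ℝ (k+1) U, smul_smul]
    have hne : ((k:ℝ) + 1) ≠ 0 := by positivity
    have : ((k:ℝ) + 1)⁻¹ * ((k+1:ℕ):ℝ) = 1 := by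
      push_cast
      field_simp
    rw [this, one_smul]
  have hnormk : ∀ k, Φ.En (Dval (vD k) - u) (Dval (vD k) - u)
      + (Dval (vD k) x₀ - u x₀) ^ 2 = ‖vD k - U‖ ^ 2 := by
    intro k
    rw [norm_sq_eq, Dval_sub]
    simp only [hU, Dval_mkD, Pi.sub_apply]
    ring
  have hbound : ∀ k, ‖vD k - U‖ ^ 2 ≤ (C ^ 2 + 2) / ((k:ℝ) + 1) := by
    intro k
    rw [hkey k, norm_smul]
    have habs : ‖((k:ℝ) + 1)⁻¹‖ = ((k:ℝ) + 1)⁻¹ := by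
      rw [Real.norm_eq_abs, abs_of_pos (by positivity)]
    rw [habs, mul_pow]
    have h1 := hsum (k+1)
    have hpos : (0:ℝ) < (k:ℝ) + 1 := by positivity
    have h2 : (((k:ℝ) + 1)⁻¹) ^ 2 * ‖∑ i ∈ Finset.range (k+1), Z (φ i)‖ ^ 2
        ≤ (((k:ℝ) + 1)⁻¹) ^ 2 * (((k:ℝ) + 1) * (C ^ 2 + 2)) := by
      apply mul_le_mul_of_nonneg_left _ (by positivity)
      calc ‖∑ i ∈ Finset.range (k+1), Z (φ i)‖ ^ 2 ≤ ((k+1:ℕ):ℝ) * (C ^ 2 + 2) := h1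
        _ = ((k:ℝ) + 1) * (C ^ 2 + 2) := by push_cast; ring
    refine h2.trans (le_of_eq ?_)
    field_simp
  refine ⟨fun k => Dval (vD k), ?_, ?_, ?_⟩
  · intro k
    refine ⟨Dval_mem _, ?_, ?_⟩
    · show Continuous (Dval (vD k))
      rw [hval k]
      exact continuous_const.mul (continuous_finset_sum _ fun i _ => hwc (φ i))
    · show HasCompactSupport (Dval (vD k))
      rw [hval k]
      have hsupSum : ∀ s : Finset ℕ, HasCompactSupport (fun x => ∑ i ∈ s, w (φ i) x) := by
        intro s
        induction s using Finset.induction_on with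
        | empty => simp only [Finset.sum_empty]; exact HasCompactSupport.zero
        | insert x s hx ih =>
          simp only [Finset.sum_insert hx]
          exact (hws _).add ih
      have heq : (fun x => ((k:ℝ) + 1)⁻¹ * ∑ i ∈ Finset.range (k+1), w (φ i) x)
          = (fun r : ℝ => ((k:ℝ) + 1)⁻¹ * r) ∘ (fun x => ∑ i ∈ Finset.range (k+1), w (φ i) x) :=
        rfl
      rw [heq]
      exact (hsupSum _).comp_left (mul_zero _)
  · show Tendsto (fun n => Φ.En (Dval (vD n) - u) (Dval (vD n) - u)
        + (Dval (vD n) x₀ - u x₀) ^ 2) atTop (nhds 0)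
    have hge : ∀ k : ℕ, 0 ≤ Φ.En (Dval (vD k) - u) (Dval (vD k) - u)
        + (Dval (vD k) x₀ - u x₀) ^ 2 := by
      intro k
      rw [hnormk k]
      positivity
    have hle2 : ∀ k : ℕ, Φ.En (Dval (vD k) - u) (Dval (vD k) - u)
        + (Dval (vD k) x₀ - u x₀) ^ 2 ≤ (C ^ 2 + 2) / ((k:ℝ) + 1) := by
      intro k
      rw [hnormk k]
      exact hbound k
    have hg0 : Tendsto (fun k : ℕ => (C ^ 2 + 2) / ((k:ℝ) + 1)) atTop (nhds 0) := by
      have h := tendsto_one_div_add_atTop_nhds_zero_nat (𝕜 := ℝ)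
      have h2 := h.const_mul (C ^ 2 + 2)
      simpa [div_eq_mul_inv] using h2
    exact squeeze_zero hge hle2 hg0
  · intro k x
    show |Dval (vD k) x| ≤ M
    rw [hval k]
    have hd : |((k:ℝ) + 1)⁻¹ * ∑ i ∈ Finset.range (k+1), w (φ i) x| ≤ M := by
      rw [abs_mul, abs_of_pos (show (0:ℝ) < ((k:ℝ)+1)⁻¹ by positivity)]
      have hs : |∑ i ∈ Finset.range (k+1), w (φ i) x| ≤ ((k:ℝ) + 1) * M := by
        calc |∑ i ∈ Finset.range (k+1), w (φ i) x|
            ≤ ∑ i ∈ Finset.range (k+1), |w (φ i) x| := Finset.abs_sum_le_sum_abs _ _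
          _ ≤ (k+1) • M := Finset.sum_le_card_nsmul _ _ _ (fun i _ => hwb (φ i) x) |>.trans (by rw [Finset.card_range])
          _ = ((k:ℝ) + 1) * M := by rw [nsmul_eq_mul]; push_cast; ring
      calc ((k:ℝ)+1)⁻¹ * |∑ i ∈ Finset.range (k+1), w (φ i) x|
          ≤ ((k:ℝ)+1)⁻¹ * (((k:ℝ) + 1) * M) := by
            apply mul_le_mul_of_nonneg_left hs (by positivity)
        _ = M := by field_simp
    exact hd
end

section
/- Let (E, F) be a resistance form on F with resistance metric R, topologized by R. Fix a nonempty open set B ⊆ F with nonempty complement, and for x, y ∈ B define the fused resistance R^{(B)}(x,y) := sup{ E(u,u)⁻¹ : u ∈ F, u(x)=1, u(y)=0, u constant on B^c }. Then for all x, y ∈ B, |R(x,y) − R^{(B)}(x,y)| ≤ 2 R(x, B^c)^{−1/2} · R(x,y)^{3/2}. -/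
open Filter Topology MeasureTheory

namespace ResistanceForm

variable {α : Type*} (Φ : ResistanceForm α)

lemma add_right {f g h : α → ℝ} (hf : f ∈ Φ.dom) (hg : g ∈ Φ.dom) (hh : h ∈ Φ.dom) :
    Φ.En f (g + h) = Φ.En f g + Φ.En f h := by
  rw [Φ.symm f hf _ (Φ.add_mem g hg h hh), Φ.add_left g hg h hh f hf,
    Φ.symm g hg f hf, Φ.symm h hh f hf]

lemma smul_right {f g : α → ℝ} (c : ℝ) (hf : f ∈ Φ.dom) (hg : g ∈ Φ.dom) :
    Φ.En f (c • g) = c * Φ.En f g := by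
  rw [Φ.symm f hf _ (Φ.smul_mem c g hg), Φ.smul_left c g hg f hf, Φ.symm g hg f hf]

lemma en_expand {f g : α → ℝ} (hf : f ∈ Φ.dom) (hg : g ∈ Φ.dom) (t : ℝ) :
    Φ.En (f + t • g) (f + t • g) = Φ.En f f + 2 * t * Φ.En f g + t ^ 2 * Φ.En g g := by
  have htg := Φ.smul_mem t g hg
  rw [Φ.add_left f hf _ htg _ (Φ.add_mem f hf _ htg),
    Φ.add_right hf hf htg, Φ.add_right htg hf htg,
    Φ.smul_right t hf hg, Φ.smul_left t g hg f hf,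
    Φ.smul_right t htg hg, Φ.smul_left t g hg g hg, Φ.symm g hg f hf]
  ring

lemma cauchy_schwarz {f g : α → ℝ} (hf : f ∈ Φ.dom) (hg : g ∈ Φ.dom) :
    Φ.En f g ^ 2 ≤ Φ.En f f * Φ.En g g := by
  by_cases hgg : Φ.En g g = 0
  · rw [hgg, mul_zero]
    by_contra hlt
    have hb : Φ.En f g ≠ 0 := by
      intro h; rw [h] at hlt; simp at hlt
    have key := Φ.nonneg _ (Φ.add_mem f hf _ (Φ.smul_mem (-(Φ.En f f + 1) / (2 * Φ.En f g)) g hg))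
    rw [Φ.en_expand hf hg, hgg] at key
    have h2b : (2:ℝ) * Φ.En f g ≠ 0 := mul_ne_zero two_ne_zero hb
    have h1 : 2 * (-(Φ.En f f + 1) / (2 * Φ.En f g)) * Φ.En f g = -(Φ.En f f + 1) := by
      rw [show 2 * (-(Φ.En f f + 1) / (2 * Φ.En f g)) * Φ.En f g
          = -((Φ.En f f + 1) / (2 * Φ.En f g) * (2 * Φ.En f g)) from by ring,
        div_mul_cancel₀ _ h2b]
    rw [h1] at key
    linarith [key]
  · have hgpos : 0 < Φ.En g g := lt_of_le_of_ne (Φ.nonneg g hg) (Ne.symm hgg)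
    have key := Φ.nonneg _ (Φ.add_mem f hf _ (Φ.smul_mem (-(Φ.En f g) / Φ.En g g) g hg))
    rw [Φ.en_expand hf hg] at key
    have h2 : (-(Φ.En f g) / Φ.En g g) ^ 2 * Φ.En g g = Φ.En f g ^ 2 / Φ.En g g := by
      rw [div_pow, neg_sq, div_mul_eq_mul_div, sq (Φ.En g g), ← div_div,
        mul_div_assoc, div_self hgg, mul_one]
    have h3 : 2 * (-(Φ.En f g) / Φ.En g g) * Φ.En f g = -(2 * (Φ.En f g ^ 2 / Φ.En g g)) := by
      rw [neg_div, mul_neg, neg_mul, neg_inj, mul_assoc, div_mul_eq_mul_div, ← sq]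
    rw [h2, h3] at key
    have h4 : Φ.En f g ^ 2 / Φ.En g g ≤ Φ.En f f := by linarith
    exact (div_le_iff₀ hgpos).mp h4

lemma sqrt_triangle {f g : α → ℝ} (hf : f ∈ Φ.dom) (hg : g ∈ Φ.dom) :
    Real.sqrt (Φ.En (f + g) (f + g)) ≤ Real.sqrt (Φ.En f f) + Real.sqrt (Φ.En g g) := by
  have hfg : Φ.En f g ≤ Real.sqrt (Φ.En f f) * Real.sqrt (Φ.En g g) := by
    have h1 : Φ.En f g ≤ |Φ.En f g| := le_abs_self _
    have h2 : |Φ.En f g| = Real.sqrt (Φ.En f g ^ 2) := (Real.sqrt_sq_eq_abs _).symm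
    rw [h2] at h1
    refine h1.trans ?_
    rw [← Real.sqrt_mul (Φ.nonneg f hf)]
    exact Real.sqrt_le_sqrt (Φ.cauchy_schwarz hf hg)
  have hexp : Φ.En (f + g) (f + g) = Φ.En f f + 2 * Φ.En f g + Φ.En g g := by
    have := Φ.en_expand hf hg 1
    simpa using this
  have hle : Φ.En (f + g) (f + g) ≤ (Real.sqrt (Φ.En f f) + Real.sqrt (Φ.En g g)) ^ 2 := by
    rw [hexp, add_sq, Real.sq_sqrt (Φ.nonneg f hf), Real.sq_sqrt (Φ.nonneg g hg)]
    nlinarith [hfg]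
  calc Real.sqrt (Φ.En (f + g) (f + g)) ≤ Real.sqrt ((Real.sqrt (Φ.En f f) + Real.sqrt (Φ.En g g)) ^ 2) :=
        Real.sqrt_le_sqrt hle
  _ = Real.sqrt (Φ.En f f) + Real.sqrt (Φ.En g g) := by
      rw [Real.sqrt_sq (by positivity)]

lemma en_const (c : ℝ) : Φ.En (fun _ : α => c) (fun _ : α => c) = 0 :=
  (Φ.zero_iff _ (Φ.const_mem c)).2 ⟨c, fun _ => rfl⟩

lemma en_const_right {f : α → ℝ} (hf : f ∈ Φ.dom) (c : ℝ) :
    Φ.En f (fun _ : α => c) = 0 := by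
  have := Φ.cauchy_schwarz hf (Φ.const_mem c)
  rw [Φ.en_const c, mul_zero] at this
  nlinarith [this]

lemma en_add_const {f : α → ℝ} (hf : f ∈ Φ.dom) (c : ℝ) :
    Φ.En (f + fun _ : α => c) (f + fun _ : α => c) = Φ.En f f := by
  have h1 : (fun _ : α => c) = (1:ℝ) • (fun _ : α => c) := by ext z; simp
  rw [h1, Φ.en_expand hf (Φ.const_mem c), Φ.en_const_right hf c, Φ.en_const c]
  ring

lemma en_pos {f : α → ℝ} (hf : f ∈ Φ.dom) {x y : α} (hxy : f x ≠ f y) :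
    0 < Φ.En f f := by
  rcases lt_or_eq_of_le (Φ.nonneg f hf) with h | h
  · exact h
  · exfalso
    obtain ⟨c, hc⟩ := (Φ.zero_iff f hf).1 h.symm
    exact hxy (by rw [hc x, hc y])

lemma en_smul_self {f : α → ℝ} (hf : f ∈ Φ.dom) (c : ℝ) :
    Φ.En (c • f) (c • f) = c ^ 2 * Φ.En f f := by
  rw [Φ.smul_left c f hf _ (Φ.smul_mem c f hf), Φ.smul_right c (by exact hf) hf]
  ring




end ResistanceForm

/-- **fused resistance estimate.** For a nonempty open set `B` with
nonempty complement and `x, y ∈ B`, the fused resistance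
`R^{(B)}(x,y) = sup { E(u,u)⁻¹ : u(x)=1, u(y)=0, u constant on Bᶜ }` satisfies
`|R(x,y) − R^{(B)}(x,y)| ≤ 2 R(x,Bᶜ)^{−1/2} R(x,y)^{3/2}`. -/
theorem fused_resistance_estimate {α : Type*} [MetricSpace α]
    (Φ : ResistanceForm α) (hdist : ∀ x y : α, dist x y = Φ.R x y)
    (B : Set α) (hB : IsOpen B) (hBne : B.Nonempty) (hBc : Bᶜ.Nonempty)
    (x y : α) (hx : x ∈ B) (hy : y ∈ B)
    (hpos : 0 < Φ.setRes {x} Bᶜ) :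
    |Φ.R x y -
        sSup {r : ℝ | ∃ u ∈ Φ.dom, u x = 1 ∧ u y = 0 ∧
          (∃ k : ℝ, ∀ z ∈ Bᶜ, u z = k) ∧ r = (Φ.En u u)⁻¹}|
      ≤ 2 * Real.sqrt (Φ.R x y ^ 3 / Φ.setRes {x} Bᶜ) := by
  classical
  set Sset := {r : ℝ | ∃ u ∈ Φ.dom, u x = 1 ∧ u y = 0 ∧
      (∃ k : ℝ, ∀ z ∈ Bᶜ, u z = k) ∧ r = (Φ.En u u)⁻¹} with hSset
  by_cases hxy : x = y
  · subst hxy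
    have hempty : Sset = ∅ := by
      ext r
      simp only [hSset, Set.mem_setOf_eq, Set.mem_empty_iff_false, iff_false]
      rintro ⟨u, hu, h1, h0, -, -⟩
      rw [h1] at h0; norm_num at h0
    have hR0 : Φ.R x x = 0 := by rw [← hdist, dist_self]
    rw [hempty, Real.sSup_empty, sub_zero, hR0]
    simp
  -- main case
  have hρ0 : 0 < Φ.R x y := hdist x y ▸ dist_pos.mpr hxy
  set ρ := Φ.R x y with hρdef
  set mset := {e : ℝ | ∃ f ∈ Φ.dom, (∀ z ∈ ({x} : Set α), f z = 1) ∧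
      (∀ z ∈ Bᶜ, f z = 0) ∧ e = Φ.En f f} with hmset
  have hMdef : Φ.setRes {x} Bᶜ = (sInf mset)⁻¹ := rfl
  set m := sInf mset with hmdef
  have hm0 : 0 < m := by
    rw [hMdef] at hpos
    exact inv_pos.mp hpos
  have hmne : mset.Nonempty := by
    by_contra h
    rw [Set.not_nonempty_iff_eq_empty] at h
    rw [hmdef, h, Real.sInf_empty] at hm0
    exact lt_irrefl 0 hm0
  set Rset := {r : ℝ | ∃ f ∈ Φ.dom, 0 < Φ.En f f ∧ r = |f x - f y| ^ 2 / Φ.En f f} with hRset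
  have hρsup : ρ = sSup Rset := by rw [hρdef]; rfl
  have hRne : Rset.Nonempty := by
    obtain ⟨f, hf, hfxy⟩ := Φ.sep x y hxy
    exact ⟨|f x - f y| ^ 2 / Φ.En f f, f, hf, Φ.en_pos hf hfxy, rfl⟩
  have keyUB : ∀ u ∈ Φ.dom, u x = 1 → u y = 0 → (Φ.En u u)⁻¹ ≤ ρ := by
    intro u hu h1 h0
    have hne : u x ≠ u y := by rw [h1, h0]; norm_num
    have hupos := Φ.en_pos hu hne
    have hmem : (Φ.En u u)⁻¹ ∈ Rset := by
      refine ⟨u, hu, hupos, ?_⟩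
      rw [h1, h0]
      norm_num [one_div]
    exact le_csSup (Φ.res_bddAbove x y) hmem
  have hSbdd : BddAbove Sset := by
    refine ⟨ρ, fun r hr => ?_⟩
    obtain ⟨u, hu, h1, h0, -, hr⟩ := hr
    exact hr ▸ keyUB u hu h1 h0
  have hSle : sSup Sset ≤ ρ := by
    refine Real.sSup_le (fun r hr => ?_) hρ0.le
    obtain ⟨u, hu, h1, h0, -, hr⟩ := hr
    exact hr ▸ keyUB u hu h1 h0
  have hmain : ∀ δ ∈ Set.Ioo (0:ℝ) ρ,
      ((Real.sqrt ((ρ - δ)⁻¹) + Real.sqrt (m + δ)) ^ 2)⁻¹ ≤ sSup Sset := by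
    rintro δ ⟨hδ0, hδρ⟩
    obtain ⟨r0, hr0mem, hr0gt⟩ := exists_lt_of_lt_csSup hRne
      (show ρ - δ < sSup Rset by rw [← hρsup]; linarith)
    obtain ⟨f₀, hf₀, hE₀, hr0⟩ := hr0mem
    rw [hr0] at hr0gt
    have hΔ : f₀ x - f₀ y ≠ 0 := by
      intro h
      rw [h] at hr0gt
      norm_num at hr0gt
      linarith
    have hsum : (f₀ + fun _ => -f₀ y) ∈ Φ.dom := Φ.add_mem f₀ hf₀ _ (Φ.const_mem _)
    set g : α → ℝ := (f₀ x - f₀ y)⁻¹ • (f₀ + fun _ => -f₀ y) with hgdefn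
    have hgdom : g ∈ Φ.dom := Φ.smul_mem _ _ hsum
    have hgx : g x = 1 := by
      simp only [hgdefn, Pi.smul_apply, Pi.add_apply, smul_eq_mul]
      rw [← sub_eq_add_neg]
      exact inv_mul_cancel₀ hΔ
    have hgy : g y = 0 := by
      simp only [hgdefn, Pi.smul_apply, Pi.add_apply, smul_eq_mul]
      rw [← sub_eq_add_neg, sub_self, mul_zero]
    have hEg : Φ.En g g = ((f₀ x - f₀ y) ^ 2)⁻¹ * Φ.En f₀ f₀ := by
      rw [hgdefn, Φ.en_smul_self hsum, Φ.en_add_const hf₀, inv_pow]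
    have hEgle : Φ.En g g ≤ (ρ - δ)⁻¹ := by
      have h1 : Φ.En g g = (|f₀ x - f₀ y| ^ 2 / Φ.En f₀ f₀)⁻¹ := by
        rw [hEg, sq_abs, inv_div, div_eq_mul_inv, mul_comm]
      rw [h1]
      exact inv_anti₀ (by linarith) hr0gt.le
    obtain ⟨hfdom, hEfle⟩ := Φ.markov g hgdom
    set f : α → ℝ := fun z => max 0 (min (g z) 1) with hfdefn
    have hfx : f x = 1 := by
      have : f x = max 0 (min (g x) 1) := rfl
      rw [this, hgx]; norm_num
    have hfy : f y = 0 := by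
      have : f y = max 0 (min (g y) 1) := rfl
      rw [this, hgy]; norm_num
    have hfle1 : ∀ z, f z ≤ 1 := fun z => max_le (by norm_num) (min_le_right _ _)
    have hEf : Φ.En f f ≤ (ρ - δ)⁻¹ := le_trans hEfle hEgle
    obtain ⟨e, hemem, helt⟩ := exists_lt_of_csInf_lt hmne (show m < m + δ by linarith)
    obtain ⟨v₀, hv₀, hv₀x, hv₀B, he⟩ := hemem
    rw [he] at helt
    obtain ⟨hvdom, hEvle⟩ := Φ.markov v₀ hv₀
    set v : α → ℝ := fun z => max 0 (min (v₀ z) 1) with hvdefn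
    have hvx : v x = 1 := by
      have h0 : v x = max 0 (min (v₀ x) 1) := rfl
      rw [h0, hv₀x x rfl]; norm_num
    have hvB : ∀ z ∈ Bᶜ, v z = 0 := by
      intro z hz
      have h0 : v z = max 0 (min (v₀ z) 1) := rfl
      rw [h0, hv₀B z hz]; norm_num
    have hvle1 : ∀ z, v z ≤ 1 := fun z => max_le (by norm_num) (min_le_right _ _)
    have hEv : Φ.En v v ≤ m + δ := le_trans hEvle helt.le
    have hfvdom : f + v ∈ Φ.dom := Φ.add_mem f hfdom v hvdom
    set w : α → ℝ := (f + v) + fun _ => (-1 : ℝ) with hwdefn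
    have hwdom : w ∈ Φ.dom := Φ.add_mem _ hfvdom _ (Φ.const_mem _)
    have hEw : Φ.En w w = Φ.En (f + v) (f + v) := Φ.en_add_const hfvdom _
    obtain ⟨hudom, hEule⟩ := Φ.markov w hwdom
    set u : α → ℝ := fun z => max 0 (min (w z) 1) with hudefn
    have hwz : ∀ z, w z = f z + v z - 1 := by
      intro z
      have : w z = (f z + v z) + (-1) := rfl
      rw [this]; ring
    have hux : u x = 1 := by
      have h0 : u x = max 0 (min (w x) 1) := rfl
      have h1 : w x = 1 := by rw [hwz, hfx, hvx]; ring
      rw [h0, h1]; norm_num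
    have huy : u y = 0 := by
      have h0 : u y = max 0 (min (w y) 1) := rfl
      have h1 : w y ≤ 0 := by rw [hwz, hfy]; have := hvle1 y; linarith
      rw [h0]
      exact max_eq_left (le_trans (min_le_left _ _) h1)
    have huB : ∀ z ∈ Bᶜ, u z = 0 := by
      intro z hz
      have h0 : u z = max 0 (min (w z) 1) := rfl
      have h1 : w z ≤ 0 := by rw [hwz, hvB z hz]; have := hfle1 z; linarith
      rw [h0]
      exact max_eq_left (le_trans (min_le_left _ _) h1)
    have hupos : 0 < Φ.En u u := Φ.en_pos hudom (show u x ≠ u y by rw [hux, huy]; norm_num)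
    have hEu : Φ.En u u ≤ (Real.sqrt ((ρ - δ)⁻¹) + Real.sqrt (m + δ)) ^ 2 := by
      refine le_trans hEule ?_
      rw [hEw]
      have h1 : Real.sqrt (Φ.En (f + v) (f + v))
          ≤ Real.sqrt ((ρ - δ)⁻¹) + Real.sqrt (m + δ) :=
        le_trans (Φ.sqrt_triangle hfdom hvdom)
          (add_le_add (Real.sqrt_le_sqrt hEf) (Real.sqrt_le_sqrt hEv))
      calc Φ.En (f + v) (f + v)
          = Real.sqrt (Φ.En (f + v) (f + v)) ^ 2 := (Real.sq_sqrt (Φ.nonneg _ hfvdom)).symm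
        _ ≤ (Real.sqrt ((ρ - δ)⁻¹) + Real.sqrt (m + δ)) ^ 2 :=
            pow_le_pow_left₀ (Real.sqrt_nonneg _) h1 2
    exact le_trans (inv_anti₀ hupos hEu)
      (le_csSup hSbdd ⟨u, hudom, hux, huy, ⟨0, huB⟩, rfl⟩)
  set G := fun δ : ℝ => ((Real.sqrt ((ρ - δ)⁻¹) + Real.sqrt (m + δ)) ^ 2)⁻¹ with hG
  have hG0 : G 0 ≤ sSup Sset := by
    have hd1 : ((ρ : ℝ) - 0) ≠ 0 := by simpa using hρ0.ne'
    have h1 : ContinuousAt (fun δ : ℝ => (ρ - δ)⁻¹) 0 :=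
      ContinuousAt.inv₀ (continuousAt_const.sub continuousAt_id) hd1
    have h2 : ContinuousAt (fun δ : ℝ => Real.sqrt ((ρ - δ)⁻¹) + Real.sqrt (m + δ)) 0 :=
      (Real.continuous_sqrt.continuousAt.comp h1).add
        (Real.continuous_sqrt.continuousAt.comp (continuousAt_const.add continuousAt_id))
    have hden : (Real.sqrt ((ρ - 0)⁻¹) + Real.sqrt (m + 0)) ^ 2 ≠ 0 := by
      have : 0 < Real.sqrt ((ρ - 0)⁻¹) := Real.sqrt_pos.mpr (by simp [inv_pos, hρ0])
      positivity
    have hcont : ContinuousAt G 0 := (h2.pow 2).inv₀ hden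
    have htend : Filter.Tendsto G (nhdsWithin 0 (Set.Ioi 0)) (nhds (G 0)) :=
      hcont.tendsto.mono_left nhdsWithin_le_nhds
    refine le_of_tendsto htend ?_
    filter_upwards [Ioo_mem_nhdsGT_of_mem (show (0:ℝ) ∈ Set.Ico 0 ρ from ⟨le_refl 0, hρ0⟩)]
      with δ hδ
    exact hmain δ hδ
  have hfinal : ρ - 2 * Real.sqrt (ρ ^ 3 / Φ.setRes {x} Bᶜ) ≤ G 0 := by
    have hr2 : Real.sqrt ρ ^ 2 = ρ := Real.sq_sqrt hρ0.le
    have ht2 : Real.sqrt m ^ 2 = m := Real.sq_sqrt hm0.le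
    set r := Real.sqrt ρ with hrdefn
    set t := Real.sqrt m with htdefn
    have hrpos : 0 < r := Real.sqrt_pos.mpr hρ0
    have ht0 : 0 ≤ t := Real.sqrt_nonneg m
    have hsqrtval : Real.sqrt (ρ ^ 3 / Φ.setRes {x} Bᶜ) = ρ * r * t := by
      rw [hMdef, div_eq_mul_inv, inv_inv, show ρ ^ 3 * m = (ρ * r * t) ^ 2 by
        rw [mul_pow, mul_pow, hr2, ht2]; ring]
      exact Real.sqrt_sq (by positivity)
    have hG0eq : G 0 = ((r⁻¹ + t) ^ 2)⁻¹ := by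
      simp [hG, Real.sqrt_inv, hrdefn, htdefn]
    rw [hsqrtval, hG0eq]
    have hden : 0 < (r⁻¹ + t) ^ 2 := by positivity
    rw [inv_eq_one_div, le_div_iff₀ hden]
    have hkey : ρ * (r⁻¹ + t) ^ 2 = (1 + r * t) ^ 2 := by
      rw [← hr2, ← mul_pow, mul_add, mul_inv_cancel₀ hrpos.ne']
    have hexpand : (ρ - 2 * (ρ * r * t)) * (r⁻¹ + t) ^ 2
        = (1 - 2 * (r * t)) * (1 + r * t) ^ 2 := by
      calc (ρ - 2 * (ρ * r * t)) * (r⁻¹ + t) ^ 2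
          = (1 - 2 * (r * t)) * (ρ * (r⁻¹ + t) ^ 2) := by ring
        _ = (1 - 2 * (r * t)) * (1 + r * t) ^ 2 := by rw [hkey]
    rw [hexpand]
    nlinarith [sq_nonneg (r * t), mul_nonneg (mul_nonneg hrpos.le ht0) (sq_nonneg (r * t)),
      mul_nonneg hrpos.le ht0]
  have hrhs0 : 0 ≤ 2 * Real.sqrt (ρ ^ 3 / Φ.setRes {x} Bᶜ) := by positivity
  rw [abs_sub_le_iff]
  constructor
  · linarith [hG0, hfinal]
  · linarith [hSle]
end

section
/- Let (E, F) be a regular resistance form on a locally compact separable space (F, R), μ a Radon measure of full support on F, (E, D) the associated regular Dirichlet form on L²(F,μ) (D being the E₁-closure of C_c(F,ℝ) ∩ F), and D_e its extended Dirichlet space, with every element of D_e identified with its continuous version. Then D_e = F⁽¹⁾, where F⁽¹⁾ is the closure of C_c(F,ℝ) ∩ F in the Hilbert space (F, E⁽¹⁾) with E⁽¹⁾(u,v) = E(u,v) + u(x₀)v(x₀). In particular, the extended Dirichlet space does not depend on the measure μ. -/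
open Filter Topology MeasureTheory

namespace RFAux

variable {α : Type*} (Φ : ResistanceForm α)

theorem neg_mem {f : α → ℝ} (hf : f ∈ Φ.dom) : -f ∈ Φ.dom := by
  have := Φ.smul_mem (-1) f hf
  rwa [neg_one_smul] at this

theorem sub_mem {f g : α → ℝ} (hf : f ∈ Φ.dom) (hg : g ∈ Φ.dom) : f - g ∈ Φ.dom := by
  have := Φ.add_mem f hf (-g) (neg_mem Φ hg)
  rwa [← sub_eq_add_neg] at this

theorem en_add_right {f g h : α → ℝ} (hf : f ∈ Φ.dom) (hg : g ∈ Φ.dom) (hh : h ∈ Φ.dom) :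
    Φ.En h (f + g) = Φ.En h f + Φ.En h g := by
  rw [Φ.symm h hh (f + g) (Φ.add_mem f hf g hg), Φ.add_left f hf g hg h hh,
    Φ.symm f hf h hh, Φ.symm g hg h hh]

theorem en_smul_right (c : ℝ) {f g : α → ℝ} (hf : f ∈ Φ.dom) (hg : g ∈ Φ.dom) :
    Φ.En f (c • g) = c * Φ.En f g := by
  rw [Φ.symm f hf (c • g) (Φ.smul_mem c g hg), Φ.smul_left c g hg f hf, Φ.symm g hg f hf]

theorem en_neg_right {f g : α → ℝ} (hf : f ∈ Φ.dom) (hg : g ∈ Φ.dom) :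
    Φ.En f (-g) = -Φ.En f g := by
  have := en_smul_right Φ (-1) hf hg
  rw [neg_one_smul] at this
  linarith

theorem en_expand_add {f g : α → ℝ} (hf : f ∈ Φ.dom) (hg : g ∈ Φ.dom) :
    Φ.En (f + g) (f + g) = Φ.En f f + 2 * Φ.En f g + Φ.En g g := by
  rw [Φ.add_left f hf g hg (f + g) (Φ.add_mem f hf g hg),
    en_add_right Φ hf hg hf, en_add_right Φ hf hg hg, Φ.symm g hg f hf]
  ring

theorem en_expand_sub {f g : α → ℝ} (hf : f ∈ Φ.dom) (hg : g ∈ Φ.dom) :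
    Φ.En (f - g) (f - g) = Φ.En f f - 2 * Φ.En f g + Φ.En g g := by
  have h1 : f - g = f + (-1 : ℝ) • g := by rw [neg_one_smul, ← sub_eq_add_neg]
  rw [h1, en_expand_add Φ hf (Φ.smul_mem (-1) g hg), en_smul_right Φ (-1) hf hg,
    Φ.smul_left (-1) g hg ((-1 : ℝ) • g) (Φ.smul_mem (-1) g hg),
    en_smul_right Φ (-1) hg hg]
  ring

theorem en_neg_neg {f : α → ℝ} (hf : f ∈ Φ.dom) : Φ.En (-f) (-f) = Φ.En f f := by
  have h1 : -f = (-1 : ℝ) • f := by rw [neg_one_smul]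
  rw [h1, Φ.smul_left (-1) f hf _ (Φ.smul_mem (-1) f hf), en_smul_right Φ (-1) hf hf]
  ring

theorem two_mul_en_le {f g : α → ℝ} (hf : f ∈ Φ.dom) (hg : g ∈ Φ.dom) :
    2 * Φ.En f g ≤ Φ.En f f + Φ.En g g := by
  have h := Φ.nonneg (f - g) (sub_mem Φ hf hg)
  rw [en_expand_sub Φ hf hg] at h
  linarith

theorem en_add_le {f g : α → ℝ} (hf : f ∈ Φ.dom) (hg : g ∈ Φ.dom) :
    Φ.En (f + g) (f + g) ≤ 2 * Φ.En f f + 2 * Φ.En g g := by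
  rw [en_expand_add Φ hf hg]
  have := two_mul_en_le Φ hf hg
  linarith

theorem en_const (c : ℝ) : Φ.En (fun _ : α => c) (fun _ : α => c) = 0 :=
  (Φ.zero_iff _ (Φ.const_mem c)).mpr ⟨c, fun _ => rfl⟩

theorem en_const_right {f : α → ℝ} (hf : f ∈ Φ.dom) (c : ℝ) :
    Φ.En f (fun _ : α => c) = 0 := by
  set b := Φ.En f (fun _ : α => c) with hb
  have key : ∀ t : ℝ, 0 ≤ Φ.En f f + 2 * (t * b) := by
    intro t
    have hc : (fun _ : α => c) ∈ Φ.dom := Φ.const_mem c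
    have h1 := Φ.nonneg (f + t • fun _ : α => c) (Φ.add_mem f hf _ (Φ.smul_mem t _ hc))
    rw [en_expand_add Φ hf (Φ.smul_mem t _ hc), en_smul_right Φ t hf hc,
      Φ.smul_left t _ hc _ (Φ.smul_mem t _ hc), en_smul_right Φ t hc hc,
      en_const Φ c] at h1
    -- h1 : 0 ≤ Φ.En f f + 2 * (t * b) + t * (t * 0)
    linarith [h1]
  by_contra hb0
  have ht := key (-(Φ.En f f + 1) / (2 * b))
  have hcalc : -(Φ.En f f + 1) / (2 * b) * b = -(Φ.En f f + 1) / 2 := by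
    field_simp
  rw [hcalc] at ht
  linarith

theorem en_add_const {f : α → ℝ} (hf : f ∈ Φ.dom) (c : ℝ) :
    Φ.En (f + fun _ : α => c) (f + fun _ : α => c) = Φ.En f f := by
  rw [en_expand_add Φ hf (Φ.const_mem c), en_const_right Φ hf c, en_const Φ c]
  ring


section Metric

variable {α : Type*} [MetricSpace α] (Φ : ResistanceForm α)

theorem sq_le_en_mul_dist (hdist : ∀ x y : α, dist x y = Φ.R x y) {g : α → ℝ} (hg : g ∈ Φ.dom) (x y : α) :
    |g x - g y| ^ 2 ≤ Φ.En g g * dist x y := by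
  rcases (Φ.nonneg g hg).lt_or_eq with hpos | hzero
  · have hmem : |g x - g y| ^ 2 / Φ.En g g ∈
        {r : ℝ | ∃ f ∈ Φ.dom, 0 < Φ.En f f ∧ r = |f x - f y| ^ 2 / Φ.En f f} :=
      ⟨g, hg, hpos, rfl⟩
    have hle : |g x - g y| ^ 2 / Φ.En g g ≤ Φ.R x y := le_csSup (Φ.res_bddAbove x y) hmem
    rw [← hdist x y] at hle
    rw [div_le_iff₀ hpos] at hle
    linarith [hle]
  · obtain ⟨c, hc⟩ := (Φ.zero_iff g hg).mp hzero.symm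
    rw [hc x, hc y, sub_self, abs_zero, ← hzero]
    simp

theorem continuous_of_mem (hdist : ∀ x y : α, dist x y = Φ.R x y) {g : α → ℝ} (hg : g ∈ Φ.dom) : Continuous g := by
  rw [Metric.continuous_iff]
  intro x ε hε
  have hE : 0 ≤ Φ.En g g := Φ.nonneg g hg
  refine ⟨ε ^ 2 / (Φ.En g g + 1), div_pos (pow_pos hε 2) (by linarith), fun y hy => ?_⟩
  have h1 : |g y - g x| ^ 2 ≤ Φ.En g g * dist y x := sq_le_en_mul_dist Φ hdist hg y x
  have h2 : Φ.En g g * dist y x ≤ Φ.En g g * (ε ^ 2 / (Φ.En g g + 1)) :=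
    mul_le_mul_of_nonneg_left hy.le hE
  have h3 : Φ.En g g * (ε ^ 2 / (Φ.En g g + 1)) < ε ^ 2 := by
    rw [mul_div_assoc', div_lt_iff₀ (by linarith)]
    nlinarith
  have h4 : |g y - g x| ^ 2 < ε ^ 2 := by linarith
  have h5 : |g y - g x| < ε := lt_of_pow_lt_pow_left₀ 2 hε.le h4
  rwa [Real.dist_eq]

theorem tendsto_pt_sub (hdist : ∀ x y : α, dist x y = Φ.R x y) {g : ℕ → α → ℝ} (hg : ∀ n, g n ∈ Φ.dom)
    (h0 : Tendsto (fun n => Φ.En (g n) (g n)) atTop (𝓝 0)) (x y : α) :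
    Tendsto (fun n => g n x - g n y) atTop (𝓝 0) := by
  have hb : Tendsto (fun n => Real.sqrt (Φ.En (g n) (g n) * dist x y)) atTop (𝓝 0) := by
    have h1 : Tendsto (fun n => Φ.En (g n) (g n) * dist x y) atTop (𝓝 0) := by
      simpa using h0.mul_const (dist x y)
    have := (Real.continuous_sqrt.tendsto' 0 0 Real.sqrt_zero).comp h1
    exact this
  refine squeeze_zero_norm (fun n => ?_) hb
  rw [Real.norm_eq_abs]
  refine Real.abs_le_sqrt ?_
  rw [← sq_abs]
  exact sq_le_en_mul_dist Φ hdist (hg n) x y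

theorem point_eval [LocallyCompactSpace α]
    [MeasurableSpace α] [BorelSpace α]
    (hdist : ∀ x y : α, dist x y = Φ.R x y)
    (μ : Measure α) [IsLocallyFiniteMeasure μ] [μ.IsOpenPosMeasure] (x₀ : α) :
    ∃ c : ℝ, 0 < c ∧ ∀ g ∈ Φ.dom, MemLp g 2 μ →
      (g x₀) ^ 2 ≤ 2 * Φ.En g g + 2 * (∫ x, (g x) ^ 2 ∂μ) / c := by
  obtain ⟨K, hK, hKn⟩ := exists_compact_mem_nhds x₀
  set U : Set α := interior K ∩ Metric.ball x₀ 1 with hUdef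
  have hUopen : IsOpen U := isOpen_interior.inter Metric.isOpen_ball
  have hx₀U : x₀ ∈ U := ⟨mem_interior_iff_mem_nhds.mpr hKn, Metric.mem_ball_self one_pos⟩
  have hUpos : 0 < μ U := hUopen.measure_pos μ ⟨x₀, hx₀U⟩
  have hUfin : μ U < ⊤ :=
    lt_of_le_of_lt (measure_mono ((Set.inter_subset_left).trans interior_subset))
      hK.measure_lt_top
  refine ⟨(μ U).toReal, ENNReal.toReal_pos hUpos.ne' hUfin.ne, fun g hg hg2 => ?_⟩
  set c := (μ U).toReal with hc
  have hcp : 0 < c := ENNReal.toReal_pos hUpos.ne' hUfin.ne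
  have hint : Integrable (fun x => (g x) ^ 2) μ := hg2.integrable_sq
  have hE : 0 ≤ Φ.En g g := Φ.nonneg g hg
  have hptwise : ∀ x ∈ U, (g x₀) ^ 2 - 2 * Φ.En g g ≤ 2 * (g x) ^ 2 := by
    intro x hx
    have h1 : |g x₀ - g x| ^ 2 ≤ Φ.En g g * dist x₀ x := sq_le_en_mul_dist Φ hdist hg x₀ x
    have h2 : dist x₀ x < 1 := by
      have := hx.2
      rw [Metric.mem_ball, dist_comm] at this
      exact this
    have h3 : Φ.En g g * dist x₀ x ≤ Φ.En g g := by
      nlinarith [dist_nonneg (x := x₀) (y := x)]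
    rw [sq_abs] at h1
    nlinarith [sq_nonneg (g x₀ - 2 * g x)]
  have hconst : ∫ _ in U, ((g x₀) ^ 2 - 2 * Φ.En g g) ∂μ
      = ((g x₀) ^ 2 - 2 * Φ.En g g) * c := by
    rw [setIntegral_const, smul_eq_mul, mul_comm]
    rfl
  have h1 : ∫ _ in U, ((g x₀) ^ 2 - 2 * Φ.En g g) ∂μ ≤ ∫ x in U, 2 * (g x) ^ 2 ∂μ :=
    setIntegral_mono_on (integrableOn_const hUfin.ne)
      ((hint.const_mul 2).integrableOn) hUopen.measurableSet hptwise
  have h2 : ∫ x in U, 2 * (g x) ^ 2 ∂μ ≤ ∫ x, 2 * (g x) ^ 2 ∂μ :=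
    setIntegral_le_integral (hint.const_mul 2)
      (Filter.Eventually.of_forall fun x => by positivity)
  have h3 : ∫ x, 2 * (g x) ^ 2 ∂μ = 2 * ∫ x, (g x) ^ 2 ∂μ := integral_const_mul 2 _
  have h4 : ((g x₀) ^ 2 - 2 * Φ.En g g) * c ≤ 2 * ∫ x, (g x) ^ 2 ∂μ := by
    rw [← hconst, ← h3]
    exact h1.trans h2
  have h5 : (g x₀) ^ 2 - 2 * Φ.En g g ≤ 2 * (∫ x, (g x) ^ 2 ∂μ) / c := by
    rw [le_div_iff₀ hcp]
    exact h4
  linarith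

end Metric
end RFAux


/-- Membership in the Dirichlet form domain `D`: the `E₁`-closure of
`C_c(F,ℝ) ∩ F` inside `F ∩ L²(F,μ)`, where `E₁(f,f) = E(f,f) + ∫ f² dμ`. -/
def MemDirichletDomain {α : Type*} [TopologicalSpace α] [MeasurableSpace α]
    (Φ : ResistanceForm α) (μ : Measure α) (u : α → ℝ) : Prop :=
  u ∈ Φ.dom ∧ MemLp u 2 μ ∧
    ∃ w : ℕ → α → ℝ,
      (∀ m, w m ∈ Φ.dom ∧ Continuous (w m) ∧ HasCompactSupport (w m)) ∧
      Filter.Tendsto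
        (fun m => Φ.En (w m - u) (w m - u) + ∫ x, (w m x - u x) ^ 2 ∂μ)
        Filter.atTop (nhds 0)

/-- Membership of a (continuous) function in the extended Dirichlet space `D_e`:
there is an `E`-Cauchy sequence in `D` converging to `u` `μ`-a.e. -/
def MemExtendedDirichlet {α : Type*} [TopologicalSpace α] [MeasurableSpace α]
    (Φ : ResistanceForm α) (μ : Measure α) (u : α → ℝ) : Prop :=
  ∃ v : ℕ → α → ℝ,
    (∀ n, MemDirichletDomain Φ μ (v n)) ∧
    (∀ ε : ℝ, 0 < ε → ∃ N : ℕ, ∀ m ≥ N, ∀ n ≥ N,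
      Φ.En (v m - v n) (v m - v n) < ε) ∧
    (∀ᵐ x ∂μ, Filter.Tendsto (fun n => v n x) Filter.atTop (nhds (u x)))

/-- For a regular resistance form on a locally compact separable
space and a Radon measure `μ` of full support, the extended Dirichlet space of the
associated regular Dirichlet form coincides with `F⁽¹⁾` (as spaces of continuous
functions); in particular it does not depend on `μ`. -/

theorem extended_dirichlet_eq_F1 {α : Type*} [MetricSpace α]
    [LocallyCompactSpace α] [TopologicalSpace.SeparableSpace α]
    [MeasurableSpace α] [BorelSpace α]
    (Φ : ResistanceForm α) (hdist : ∀ x y : α, dist x y = Φ.R x y)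
    (hreg : ∀ f : α → ℝ, Continuous f → HasCompactSupport f → ∀ ε : ℝ, 0 < ε →
      ∃ g ∈ Φ.dom, Continuous g ∧ HasCompactSupport g ∧ ∀ x, |f x - g x| ≤ ε)
    (μ : Measure α) [IsLocallyFiniteMeasure μ] [μ.IsOpenPosMeasure]
    (x₀ : α) (u : α → ℝ) (hu : Continuous u) :
    MemExtendedDirichlet Φ μ u ↔ MemF1 Φ x₀ u := by
  constructor
  · rintro ⟨v, hv, hcauchy, hae⟩
    have hvdom : ∀ n, v n ∈ Φ.dom := fun n => (hv n).1
    obtain ⟨f, hfdom, hconv⟩ := Φ.complete v hvdom hcauchy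
    have hfc : Continuous f := RFAux.continuous_of_mem Φ hdist hfdom
    set S := {x : α | Tendsto (fun n => v n x) atTop (𝓝 (u x))} with hSdef
    have hSnull : μ Sᶜ = 0 := by
      have h : ∀ᵐ x ∂μ, x ∈ S := hae
      rwa [MeasureTheory.ae_iff] at h
    have hSdense : Dense S := by
      rw [dense_iff_inter_open]
      intro U hU hUne
      by_contra hcon
      rw [Set.not_nonempty_iff_eq_empty] at hcon
      have hsubU : U ⊆ Sᶜ := fun x hx hxS =>
        Set.eq_empty_iff_forall_notMem.mp hcon x ⟨hx, hxS⟩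
      exact absurd (measure_mono_null hsubU hSnull) (hU.measure_pos μ hUne).ne'
    have : Nonempty α := ⟨x₀⟩
    obtain ⟨p, hp⟩ := hSdense.nonempty
    have hsubdom : ∀ n, v n - f ∈ Φ.dom := fun n => RFAux.sub_mem Φ (hvdom n) hfdom
    have hptlim : ∀ x y : α,
        Tendsto (fun n => v n x - v n y) atTop (𝓝 (f x - f y)) := by
      intro x y
      have h0 := RFAux.tendsto_pt_sub Φ hdist hsubdom hconv x y
      have h1 := h0.add_const (f x - f y)
      rw [zero_add] at h1
      refine h1.congr fun n => ?_
      simp only [Pi.sub_apply]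
      ring
    have hconstS : ∀ x ∈ S, u x - f x = u p - f p := by
      intro x hx
      have h1 : Tendsto (fun n => v n x - v n p) atTop (𝓝 (u x - u p)) := hx.sub hp
      have h2 := hptlim x p
      have h3 := tendsto_nhds_unique h1 h2
      linarith
    have hueq : u = f + fun _ => (u p - f p) := by
      have hcont2 : Continuous (f + fun _ : α => (u p - f p)) :=
        hfc.add continuous_const
      refine Continuous.ext_on hSdense hu hcont2 fun x hx => ?_
      have := hconstS x hx
      simp only [Pi.add_apply]
      linarith
    obtain ⟨cst, hcst⟩ : ∃ c : ℝ, u = f + fun _ => c := ⟨_, hueq⟩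
    have hudom : u ∈ Φ.dom := hcst ▸ Φ.add_mem f hfdom _ (Φ.const_mem _)
    have henu : ∀ n, Φ.En (v n - u) (v n - u) = Φ.En (v n - f) (v n - f) := by
      intro n
      have heq : v n - u = (v n - f) + fun _ => -cst := by
        funext x
        simp only [hcst, Pi.sub_apply, Pi.add_apply]
        ring
      rw [heq, RFAux.en_add_const Φ (hsubdom n) _]
    have hEnu : Tendsto (fun n => Φ.En (v n - u) (v n - u)) atTop (𝓝 0) := by
      simpa only [henu] using hconv
    have hsubdomu : ∀ n, v n - u ∈ Φ.dom := fun n => RFAux.sub_mem Φ (hvdom n) hudom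
    have hux0 : Tendsto (fun n => v n x₀ - u x₀) atTop (𝓝 0) := by
      have h0 := RFAux.tendsto_pt_sub Φ hdist hsubdomu hEnu x₀ p
      have h1 : Tendsto (fun n => v n p - u p) atTop (𝓝 0) := by
        have := hp.sub_const (u p)
        simpa using this
      have h2 := h0.add h1
      rw [add_zero] at h2
      refine h2.congr fun n => ?_
      simp only [Pi.sub_apply]
      ring
    obtain ⟨c₀, hc₀, hpe⟩ := RFAux.point_eval Φ hdist μ x₀
    have hsel : ∀ n : ℕ, ∃ g : α → ℝ,
        (g ∈ Φ.dom ∧ Continuous g ∧ HasCompactSupport g) ∧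
        Φ.En (g - v n) (g - v n) < 1 / ((n : ℝ) + 1) ∧
        (g x₀ - v n x₀) ^ 2 < 1 / ((n : ℝ) + 1) := by
      intro n
      obtain ⟨w, hw, hwconv⟩ := (hv n).2.2
      have hgd : ∀ m, w m - v n ∈ Φ.dom := fun m => RFAux.sub_mem Φ (hw m).1 (hvdom n)
      have hintnn : ∀ m, 0 ≤ ∫ x, (w m x - v n x) ^ 2 ∂μ := fun m =>
        integral_nonneg fun x => sq_nonneg _
      have hEt : Tendsto (fun m => Φ.En (w m - v n) (w m - v n)) atTop (𝓝 0) :=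
        squeeze_zero (fun m => Φ.nonneg _ (hgd m))
          (fun m => le_add_of_nonneg_right (hintnn m)) hwconv
      have hIt : Tendsto (fun m => ∫ x, (w m x - v n x) ^ 2 ∂μ) atTop (𝓝 0) :=
        squeeze_zero hintnn
          (fun m => le_add_of_nonneg_left (Φ.nonneg _ (hgd m))) hwconv
      have hmemlp : ∀ m, MemLp (w m - v n) 2 μ := fun m =>
        ((hw m).2.1.memLp_of_hasCompactSupport (hw m).2.2).sub (hv n).2.1
      have hpt : Tendsto (fun m => (w m x₀ - v n x₀) ^ 2) atTop (𝓝 0) := by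
        have hup : Tendsto (fun m => 2 * Φ.En (w m - v n) (w m - v n)
            + 2 * (∫ x, (w m x - v n x) ^ 2 ∂μ) / c₀) atTop (𝓝 0) := by
          have := (hEt.const_mul 2).add ((hIt.const_mul 2).div_const c₀)
          simpa using this
        refine squeeze_zero (fun m => sq_nonneg _) (fun m => ?_) hup
        have hb := hpe (w m - v n) (hgd m) (hmemlp m)
        simpa only [Pi.sub_apply] using hb
      have hεn : (0 : ℝ) < 1 / ((n : ℝ) + 1) := by positivity
      have hev := (hEt.eventually (gt_mem_nhds hεn)).and
        (hpt.eventually (gt_mem_nhds hεn))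
      obtain ⟨m, hm1, hm2⟩ := hev.exists
      exact ⟨w m, hw m, hm1, hm2⟩
    choose φ hφ hφE hφpt using hsel
    refine ⟨hudom, φ, hφ, ?_⟩
    have hinv : Tendsto (fun n : ℕ => 1 / ((n : ℝ) + 1)) atTop (𝓝 0) :=
      tendsto_one_div_add_atTop_nhds_zero_nat
    have hE : Tendsto (fun n => Φ.En (φ n - u) (φ n - u)) atTop (𝓝 0) := by
      have hub : ∀ n, Φ.En (φ n - u) (φ n - u) ≤
          2 * Φ.En (φ n - v n) (φ n - v n) + 2 * Φ.En (v n - u) (v n - u) := by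
        intro n
        have heq : φ n - u = (φ n - v n) + (v n - u) := by
          funext x
          simp only [Pi.sub_apply, Pi.add_apply]
          ring
        rw [heq]
        exact RFAux.en_add_le Φ (RFAux.sub_mem Φ (hφ n).1 (hvdom n)) (hsubdomu n)
      have h1 : Tendsto (fun n => Φ.En (φ n - v n) (φ n - v n)) atTop (𝓝 0) :=
        squeeze_zero (fun n => Φ.nonneg _ (RFAux.sub_mem Φ (hφ n).1 (hvdom n)))
          (fun n => (hφE n).le) hinv
      have hub2 : Tendsto (fun n => 2 * Φ.En (φ n - v n) (φ n - v n)
          + 2 * Φ.En (v n - u) (v n - u)) atTop (𝓝 0) := by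
        have := (h1.const_mul 2).add (hEnu.const_mul 2)
        simpa using this
      exact squeeze_zero (fun n => Φ.nonneg _ (RFAux.sub_mem Φ (hφ n).1 hudom)) hub hub2
    have hPt : Tendsto (fun n => (φ n x₀ - u x₀) ^ 2) atTop (𝓝 0) := by
      have hub : ∀ n, (φ n x₀ - u x₀) ^ 2 ≤
          2 * (φ n x₀ - v n x₀) ^ 2 + 2 * (v n x₀ - u x₀) ^ 2 := fun n => by
        nlinarith [sq_nonneg (φ n x₀ - 2 * v n x₀ + u x₀)]
      have h2 : Tendsto (fun n => (v n x₀ - u x₀) ^ 2) atTop (𝓝 0) := by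
        simpa using hux0.pow 2
      have h1 : Tendsto (fun n => (φ n x₀ - v n x₀) ^ 2) atTop (𝓝 0) :=
        squeeze_zero (fun n => sq_nonneg _) (fun n => (hφpt n).le) hinv
      have hub2 := (h1.const_mul 2).add (h2.const_mul 2)
      exact squeeze_zero (fun n => sq_nonneg _) hub (by simpa using hub2)
    simpa using hE.add hPt
  · rintro ⟨hudom, v, hv, hconv⟩
    have hvdom : ∀ n, v n ∈ Φ.dom := fun n => (hv n).1
    have hsub : ∀ n, v n - u ∈ Φ.dom := fun n => RFAux.sub_mem Φ (hvdom n) hudom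
    have hEnn : ∀ n, 0 ≤ Φ.En (v n - u) (v n - u) := fun n => Φ.nonneg _ (hsub n)
    have hE0 : Tendsto (fun n => Φ.En (v n - u) (v n - u)) atTop (𝓝 0) :=
      squeeze_zero hEnn (fun n => le_add_of_nonneg_right (sq_nonneg _)) hconv
    have hp0 : Tendsto (fun n => (v n x₀ - u x₀) ^ 2) atTop (𝓝 0) :=
      squeeze_zero (fun n => sq_nonneg _) (fun n => le_add_of_nonneg_left (hEnn n)) hconv
    have hDD : ∀ n, MemDirichletDomain Φ μ (v n) := by
      intro n
      refine ⟨hvdom n, (hv n).2.1.memLp_of_hasCompactSupport (hv n).2.2,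
        fun _ => v n, fun _ => hv n, ?_⟩
      have h0 : (fun _ : ℕ => Φ.En (v n - v n) (v n - v n)
          + ∫ x, (v n x - v n x) ^ 2 ∂μ) = fun _ => (0 : ℝ) := by
        funext m
        have h1 : Φ.En (v n - v n) (v n - v n) = 0 := by
          rw [sub_self]
          have hz : (0 : α → ℝ) = fun _ : α => (0 : ℝ) := rfl
          rw [hz]
          exact RFAux.en_const Φ 0
        rw [h1]
        simp
      rw [h0]
      exact tendsto_const_nhds
    refine ⟨v, hDD, ?_, ?_⟩
    · intro ε hε
      have hev := hE0.eventually (gt_mem_nhds (show (0 : ℝ) < ε / 4 by linarith))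
      rw [eventually_atTop] at hev
      obtain ⟨N, hN⟩ := hev
      refine ⟨N, fun m hm n hn => ?_⟩
      have heq : v m - v n = (v m - u) + (-(v n - u)) := by
        funext x
        simp only [Pi.sub_apply, Pi.add_apply, Pi.neg_apply]
        ring
      have hle : Φ.En (v m - v n) (v m - v n) ≤
          2 * Φ.En (v m - u) (v m - u) + 2 * Φ.En (-(v n - u)) (-(v n - u)) := by
        rw [heq]
        exact RFAux.en_add_le Φ (hsub m) (RFAux.neg_mem Φ (hsub n))
      rw [RFAux.en_neg_neg Φ (hsub n)] at hle
      have h1 := hN m hm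
      have h2 := hN n hn
      linarith
    · refine Filter.Eventually.of_forall fun x => ?_
      have hbound : Tendsto (fun n => Real.sqrt (Φ.En (v n - u) (v n - u) * dist x x₀)
          + Real.sqrt ((v n x₀ - u x₀) ^ 2)) atTop (𝓝 0) := by
        have h1 : Tendsto (fun n => Φ.En (v n - u) (v n - u) * dist x x₀) atTop (𝓝 0) := by
          simpa using hE0.mul_const (dist x x₀)
        have h2 := (Real.continuous_sqrt.tendsto' 0 0 Real.sqrt_zero).comp h1
        have h3 := (Real.continuous_sqrt.tendsto' 0 0 Real.sqrt_zero).comp hp0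
        simpa using h2.add h3
      have habs : Tendsto (fun n => v n x - u x) atTop (𝓝 0) := by
        refine squeeze_zero_norm (fun n => ?_) hbound
        rw [Real.norm_eq_abs]
        have t1 : |(v n x - u x) - (v n x₀ - u x₀)| ≤
            Real.sqrt (Φ.En (v n - u) (v n - u) * dist x x₀) := by
          refine Real.abs_le_sqrt ?_
          rw [← sq_abs]
          have hs := RFAux.sq_le_en_mul_dist Φ hdist (hsub n) x x₀
          simpa only [Pi.sub_apply] using hs
        have t2 : |v n x₀ - u x₀| ≤ Real.sqrt ((v n x₀ - u x₀) ^ 2) := by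
          rw [Real.sqrt_sq_eq_abs]
        calc |v n x - u x|
            ≤ |(v n x - u x) - (v n x₀ - u x₀)| + |v n x₀ - u x₀| := by
              have h := abs_add_le ((v n x - u x) - (v n x₀ - u x₀)) (v n x₀ - u x₀)
              simpa using h
          _ ≤ Real.sqrt (Φ.En (v n - u) (v n - u) * dist x x₀)
              + Real.sqrt ((v n x₀ - u x₀) ^ 2) := add_le_add t1 t2
      have hfin := habs.add_const (u x)
      rw [zero_add] at hfin
      refine hfin.congr fun n => ?_
      ring
end
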